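/- arXiv:2402.12961 — 7 statements merged into one kernel-verified Lean document; each statement's English description precedes it below -/
import Mathlib

section
/- Let T ∈ B_{A^{1/2}}(H) and suppose the range of A is closed. Then for every λ ∈ ℂ with |λ| > ‖T‖_A, the operator λI − T is A-invertible in B_{A^{1/2}}(H), i.e., λ ∈ ρ_A(T). -/
variable {H : Type*} [NormedAddCommGroup H] [InnerProductSpace ℂ H] [CompleteSpace H]

/-- The semi-norm `‖x‖_A = ⟨Ax, x⟩^{1/2}` induced by a positive operator `A`. -/
noncomputable def anorm (A : H →L[ℂ] H) (x : H) : ℝ :=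
  Real.sqrt (RCLike.re (inner ℂ (A x) x : ℂ))

/-- Membership in `B_{A^{1/2}}(H)`: there is `c > 0` with `‖Tx‖_A ≤ c ‖x‖_A` for all `x`. -/
def MemBA (A T : H →L[ℂ] H) : Prop :=
  ∃ c > 0, ∀ x : H, anorm A (T x) ≤ c * anorm A x

/-- The `A`-operator seminorm `‖T‖_A`: the least `c ≥ 0` with `‖Tx‖_A ≤ c ‖x‖_A` for all `x`. -/
noncomputable def opANorm (A T : H →L[ℂ] H) : ℝ :=
  sInf {c : ℝ | 0 ≤ c ∧ ∀ x : H, anorm A (T x) ≤ c * anorm A x}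

/-- `T` is `A`-invertible in `B_{A^{1/2}}(H)`. -/
def AInv (A T : H →L[ℂ] H) : Prop :=
  T ≠ 0 ∧ ∃ S : H →L[ℂ] H, S ≠ 0 ∧ MemBA A S ∧
    A.comp (T.comp S) = A ∧ A.comp (S.comp T) = A

/-- The `A`-resolvent set `ρ_A(T)`. -/
def rhoA (A T : H →L[ℂ] H) : Set ℂ :=
  {lam : ℂ | AInv A (lam • (1 : H →L[ℂ] H) - T)}

/-- The `A`-spectrum `σ_A(T)`. -/
def sigmaA (A T : H →L[ℂ] H) : Set ℂ := (rhoA A T)ᶜ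

/-- The `A`-spectral radius `r_A(T) = inf_{n ≥ 1} ‖T^n‖_A^{1/n}`. -/
noncomputable def rA (A T : H →L[ℂ] H) : ℝ :=
  ⨅ n : ℕ+, (opANorm A (T ^ (n : ℕ))) ^ ((((n : ℕ) : ℝ))⁻¹)

/-- `sup {|λ| : λ ∈ σ_A(T)}`. -/
noncomputable def supSpecA (A T : H →L[ℂ] H) : ℝ :=
  sSup ((fun z : ℂ => ‖z‖) '' sigmaA A T)

/-- `S` is the `A^{1/2}`-adjoint `T^⋄` of `T`. -/
def IsDiamond (sqrtA T S : H →L[ℂ] H) : Prop :=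
  sqrtA.comp S = (ContinuousLinearMap.adjoint T).comp sqrtA ∧
    Set.range (⇑S) ⊆ closure (Set.range (⇑sqrtA))

/-- The orthogonal projection of `H` onto the closure of the range of `A`. -/
noncomputable def projA (A : H →L[ℂ] H) : H →L[ℂ] H :=
  haveI : CompleteSpace ((LinearMap.range (A : H →ₗ[ℂ] H)).topologicalClosure : Submodule ℂ H) :=
    (Submodule.isClosed_topologicalClosure _).completeSpace_coe
  ((LinearMap.range (A : H →ₗ[ℂ] H)).topologicalClosure.subtypeL).comp
    (Submodule.orthogonalProjectionOnto (LinearMap.range (A : H →ₗ[ℂ] H)).topologicalClosure)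

/-! Since `ran A` is closed, the open mapping theorem bounds `‖P x‖` by a multiple of `‖A x‖`,
hence of `‖x‖_A`, where `P` is the orthogonal projection onto `ran A`. The compression
`C = P (λ⁻¹ T)` shrinks `‖·‖_A` by the factor `‖T‖_A / |λ| < 1`, and since `C = P C` this turns into
geometric decay of the operator norms `‖Cⁿ‖`, so the Neumann series `U = ∑ Cⁿ` converges.
As `A P = A` and `P T P = P T` (the kernel of `A` is `T`-invariant), `S = λ⁻¹ U P` is an
`A`-inverse of `λ - T`. -/

set_option linter.unusedSectionVars false

open ContinuousLinearMap
open scoped InnerProduct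

section ASeminorm

variable (A : H →L[ℂ] H)

theorem anorm_nonneg (x : H) : 0 ≤ anorm A x := Real.sqrt_nonneg _

theorem anorm_smul (a : ℂ) (x : H) : anorm A (a • x) = ‖a‖ * anorm A x := by
  have h : (inner ℂ (A (a • x)) (a • x) : ℂ) = ((‖a‖ ^ 2 : ℝ) : ℂ) * inner ℂ (A x) x := by
    rw [map_smul, inner_smul_left, inner_smul_right, ← mul_assoc, RCLike.conj_mul]
    norm_cast
  rw [anorm, anorm, h, RCLike.re_to_complex, RCLike.re_to_complex, Complex.re_ofReal_mul,
    Real.sqrt_mul (by positivity), Real.sqrt_sq (norm_nonneg a)]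

theorem anorm_le_sqrt_norm_mul_norm (x : H) : anorm A x ≤ √‖A‖ * ‖x‖ := by
  have h : RCLike.re (inner ℂ (A x) x : ℂ) ≤ ‖A‖ * ‖x‖ ^ 2 :=
    calc RCLike.re (inner ℂ (A x) x : ℂ) ≤ ‖A x‖ * ‖x‖ :=
          (RCLike.re_le_norm _).trans (norm_inner_le_norm _ _)
      _ ≤ ‖A‖ * ‖x‖ * ‖x‖ := by gcongr; exact A.le_opNorm x
      _ = ‖A‖ * ‖x‖ ^ 2 := by ring
  calc anorm A x ≤ √(‖A‖ * ‖x‖ ^ 2) := Real.sqrt_le_sqrt h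
    _ = √‖A‖ * ‖x‖ := by rw [Real.sqrt_mul (norm_nonneg A), Real.sqrt_sq (norm_nonneg x)]

theorem anorm_adjoint_mul_self (R : H →L[ℂ] H) (x : H) : anorm (R† * R) x = ‖R x‖ := by
  rw [anorm, mul_apply_eq_comp, adjoint_inner_left, inner_self_eq_norm_sq,
    Real.sqrt_sq (norm_nonneg _)]

variable {A}

theorem norm_apply_le_sqrt_norm_mul_anorm (hA : A.IsPositive) (x : H) :
    ‖A x‖ ≤ √‖A‖ * anorm A x := by
  obtain ⟨R, rfl⟩ := CStarAlgebra.nonneg_iff_eq_star_mul_self.1 ((nonneg_iff_isPositive A).2 hA)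
  rw [star_eq_adjoint, anorm_adjoint_mul_self, mul_def, norm_adjoint_comp_self,
    Real.sqrt_mul_self (norm_nonneg R), comp_apply, ← LinearIsometryEquiv.norm_map adjoint R]
  exact R†.le_opNorm (R x)

theorem anorm_eq_zero_iff (hA : A.IsPositive) {x : H} : anorm A x = 0 ↔ A x = 0 := by
  refine ⟨fun h => norm_le_zero_iff.1 ?_, fun h => by simp [anorm, h]⟩
  simpa [h] using norm_apply_le_sqrt_norm_mul_anorm hA x

theorem anorm_eq_of_apply_eq (hA : A.IsPositive) {x y : H} (h : A x = A y) :
    anorm A x = anorm A y := by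
  rw [anorm, anorm]
  congr 2
  calc (inner ℂ (A x) x : ℂ) = inner ℂ (A y) x := by rw [h]
    _ = inner ℂ y (A x) := hA.inner_left_eq_inner_right y x
    _ = inner ℂ y (A y) := by rw [h]
    _ = inner ℂ (A y) y := (hA.inner_left_eq_inner_right y y).symm

theorem exists_anorm_pos (hA : A.IsPositive) (hA0 : A ≠ 0) : ∃ x, 0 < anorm A x := by
  by_contra! h
  exact hA0 (ext fun x => (anorm_eq_zero_iff hA).1 ((h x).antisymm (Real.sqrt_nonneg _)))

end ASeminorm

section MemBA

variable {A T : H →L[ℂ] H}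

theorem MemBA.isLeast_opANorm (hT : MemBA A T) :
    IsLeast {c : ℝ | 0 ≤ c ∧ ∀ x : H, anorm A (T x) ≤ c * anorm A x} (opANorm A T) := by
  obtain ⟨c, hc, hcT⟩ := hT
  have hbdd : BddBelow {c : ℝ | 0 ≤ c ∧ ∀ x : H, anorm A (T x) ≤ c * anorm A x} :=
    ⟨0, fun _ hc => hc.1⟩
  have hclosed : IsClosed {c : ℝ | 0 ≤ c ∧ ∀ x : H, anorm A (T x) ≤ c * anorm A x} := by
    simp only [Set.ofPred_and, Set.ofPred_forall]
    exact isClosed_Ici.inter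
      (isClosed_iInter fun x => isClosed_le continuous_const (continuous_id.mul continuous_const))
  exact ⟨hclosed.csInf_mem ⟨c, hc.le, hcT⟩ hbdd, fun _ hc => csInf_le hbdd hc⟩

theorem MemBA.opANorm_nonneg (hT : MemBA A T) : 0 ≤ opANorm A T :=
  hT.isLeast_opANorm.1.1

theorem MemBA.anorm_apply_le (hT : MemBA A T) (x : H) :
    anorm A (T x) ≤ opANorm A T * anorm A x :=
  hT.isLeast_opANorm.1.2 x

theorem MemBA.apply_eq_zero (hA : A.IsPositive) (hT : MemBA A T) {x : H} (hx : A x = 0) :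
    A (T x) = 0 := by
  have hTx := hT.anorm_apply_le x
  rw [(anorm_eq_zero_iff hA).2 hx, mul_zero] at hTx
  exact (anorm_eq_zero_iff hA).1 (hTx.antisymm (anorm_nonneg A _))

theorem memBA_of_norm_apply_le {c : ℝ} (hc : 0 ≤ c) (h : ∀ x, ‖T x‖ ≤ c * anorm A x) :
    MemBA A T := by
  refine ⟨√‖A‖ * c + 1, by positivity, fun x => ?_⟩
  calc anorm A (T x) ≤ √‖A‖ * ‖T x‖ := anorm_le_sqrt_norm_mul_norm A (T x)
    _ ≤ √‖A‖ * (c * anorm A x) := by gcongr; exact h x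
    _ ≤ (√‖A‖ * c + 1) * anorm A x := by nlinarith [anorm_nonneg A x]

theorem smul_one_sub_ne_zero (hA : A.IsPositive) (hA0 : A ≠ 0) (hT : MemBA A T) {μ : ℂ}
    (hμ : opANorm A T < ‖μ‖) : μ • (1 : H →L[ℂ] H) - T ≠ 0 := by
  intro h
  obtain ⟨x, hx⟩ := exists_anorm_pos hA hA0
  have hle := hT.anorm_apply_le x
  rw [show T x = μ • x by simp [← sub_eq_zero.1 h], anorm_smul] at hle
  exact hμ.not_ge (le_of_mul_le_mul_right hle hx)

end MemBA

section Projection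

variable {A : H →L[ℂ] H}

theorem projA_eq_starProjection :
    projA A = (LinearMap.range (A : H →ₗ[ℂ] H)).topologicalClosure.starProjection :=
  rfl

theorem orthogonal_closure_range_eq_ker (hA : A.IsPositive) :
    (LinearMap.range (A : H →ₗ[ℂ] H)).topologicalClosureᗮ = LinearMap.ker (A : H →ₗ[ℂ] H) := by
  rw [Submodule.orthogonal_closure]
  exact (orthogonal_range A).trans (by rw [hA.isSelfAdjoint.adjoint_eq])

theorem projA_apply_eq_zero_iff (hA : A.IsPositive) {x : H} : projA A x = 0 ↔ A x = 0 := by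
  rw [projA_eq_starProjection, Submodule.starProjection_apply_eq_zero_iff,
    orthogonal_closure_range_eq_ker hA]
  rfl

theorem map_projA_apply (hA : A.IsPositive) (x : H) : A (projA A x) = A x := by
  have hx : x - projA A x ∈ LinearMap.ker (A : H →ₗ[ℂ] H) := by
    rw [← orthogonal_closure_range_eq_ker hA]
    exact Submodule.sub_starProjection_mem_orthogonal x
  rw [LinearMap.mem_ker, coe_coe, map_sub, sub_eq_zero] at hx
  exact hx.symm

theorem anorm_projA_apply (hA : A.IsPositive) (x : H) : anorm A (projA A x) = anorm A x :=
  anorm_eq_of_apply_eq hA (map_projA_apply hA x)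

theorem mul_projA (hA : A.IsPositive) : A * projA A = A :=
  ext (map_projA_apply hA)

theorem projA_mul_projA : projA A * projA A = projA A :=
  Submodule.isIdempotentElem_starProjection _

theorem projA_mul_mul_projA (hA : A.IsPositive) {T : H →L[ℂ] H} (hT : MemBA A T) :
    projA A * T * projA A = projA A * T := by
  refine ext fun x => ?_
  have hx : A (T (x - projA A x)) = 0 :=
    hT.apply_eq_zero hA (by rw [map_sub, map_projA_apply hA, sub_self])
  rw [← projA_apply_eq_zero_iff hA, map_sub, map_sub, sub_eq_zero] at hx
  exact hx.symm

theorem exists_norm_projA_apply_le (hA : A.IsPositive) (hclosed : IsClosed (Set.range A)) :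
    ∃ K ≥ 0, ∀ x, ‖projA A x‖ ≤ K * ‖A x‖ := by
  have : CompleteSpace (LinearMap.range (A : H →ₗ[ℂ] H)) :=
    (show IsClosed (LinearMap.range (A : H →ₗ[ℂ] H) : Set H) from hclosed).completeSpace_coe
  obtain ⟨C, hC, hpre⟩ := A.rangeRestrict.exists_preimage_norm_le Set.rangeFactorization_surjective
  refine ⟨C, hC.le, fun x => ?_⟩
  obtain ⟨y, hyx, hy⟩ := hpre (A.rangeRestrict x)
  have hPxy : projA A x = projA A y := by
    rw [← sub_eq_zero, ← map_sub, projA_apply_eq_zero_iff hA, map_sub, sub_eq_zero]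
    exact congr_arg Subtype.val hyx.symm
  calc ‖projA A x‖ = ‖projA A y‖ := by rw [hPxy]
    _ ≤ ‖y‖ := Submodule.norm_starProjection_apply_le _ y
    _ ≤ C * ‖A.rangeRestrict x‖ := hy
    _ = C * ‖A x‖ := rfl

theorem exists_norm_projA_apply_le_anorm (hA : A.IsPositive) (hclosed : IsClosed (Set.range A)) :
    ∃ K ≥ 0, ∀ x, ‖projA A x‖ ≤ K * anorm A x := by
  obtain ⟨K, hK, hKA⟩ := exists_norm_projA_apply_le hA hclosed
  refine ⟨K * √‖A‖, by positivity, fun x => ?_⟩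
  calc ‖projA A x‖ ≤ K * ‖A x‖ := hKA x
    _ ≤ K * (√‖A‖ * anorm A x) := by gcongr; exact norm_apply_le_sqrt_norm_mul_anorm hA x
    _ = K * √‖A‖ * anorm A x := by ring

theorem memBA_mul_projA (hA : A.IsPositive) (hclosed : IsClosed (Set.range A)) (V : H →L[ℂ] H) :
    MemBA A (V * projA A) := by
  obtain ⟨K, hK, hKA⟩ := exists_norm_projA_apply_le_anorm hA hclosed
  refine memBA_of_norm_apply_le (c := ‖V‖ * K) (by positivity) fun x => ?_
  calc ‖(V * projA A) x‖ ≤ ‖V‖ * ‖projA A x‖ := V.le_opNorm _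
    _ ≤ ‖V‖ * (K * anorm A x) := by gcongr; exact hKA x
    _ = ‖V‖ * K * anorm A x := by ring

end Projection

section NeumannSeries

variable {A : H →L[ℂ] H}

theorem summable_pow_of_anorm_le {C : H →L[ℂ] H} {K r : ℝ} (hK : 0 ≤ K) (hr0 : 0 ≤ r)
    (hr1 : r < 1) (hCK : ∀ x, ‖C x‖ ≤ K * anorm A (C x))
    (hCr : ∀ x, anorm A (C x) ≤ r * anorm A x) : Summable (C ^ ·) := by
  have hpow : ∀ n x, anorm A ((C ^ n) x) ≤ r ^ n * anorm A x := by
    intro n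
    induction n with
    | zero => simp
    | succ n ih =>
      intro x
      calc anorm A ((C ^ (n + 1)) x) = anorm A (C ((C ^ n) x)) := by
            rw [pow_succ', mul_apply_eq_comp]
        _ ≤ r * (r ^ n * anorm A x) := (hCr _).trans (by gcongr; exact ih x)
        _ = r ^ (n + 1) * anorm A x := by ring
  refine ((summable_geometric_of_lt_one hr0 hr1).mul_left (K * √‖A‖)).of_norm_bounded_eventually_nat
    ?_
  filter_upwards [Filter.eventually_ge_atTop 1] with n hn
  obtain ⟨n, rfl⟩ := Nat.exists_eq_add_of_le' hn
  refine opNorm_le_bound _ (by positivity) fun x => ?_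
  have hCn : (C ^ (n + 1)) x = C ((C ^ n) x) := by rw [pow_succ', mul_apply_eq_comp]
  calc ‖(C ^ (n + 1)) x‖ ≤ K * anorm A ((C ^ (n + 1)) x) := by rw [hCn]; exact hCK _
    _ ≤ K * (r ^ (n + 1) * (√‖A‖ * ‖x‖)) := by
        gcongr
        exact (hpow _ x).trans (by gcongr; exact anorm_le_sqrt_norm_mul_norm A x)
    _ = K * √‖A‖ * r ^ (n + 1) * ‖x‖ := by ring

theorem summable_pow_projA_mul (hA : A.IsPositive) (hclosed : IsClosed (Set.range A))
    {T : H →L[ℂ] H} {r : ℝ} (hr0 : 0 ≤ r) (hr1 : r < 1)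
    (hTr : ∀ x, anorm A (T x) ≤ r * anorm A x) : Summable ((projA A * T) ^ ·) := by
  obtain ⟨K, hK, hKA⟩ := exists_norm_projA_apply_le_anorm hA hclosed
  refine summable_pow_of_anorm_le (A := A) hK hr0 hr1 (fun x => ?_) (fun x => ?_)
  · rw [mul_apply_eq_comp]
    calc ‖projA A (T x)‖ = ‖projA A (projA A (T x))‖ :=
          congr_arg norm (DFunLike.congr_fun projA_mul_projA (T x)).symm
      _ ≤ K * anorm A (projA A (T x)) := hKA _
  · rw [mul_apply_eq_comp, anorm_projA_apply hA]
    exact hTr x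

end NeumannSeries

section Algebra

variable {R : Type*} [Ring R] {a p t u : R}

theorem mul_one_sub_mul_eq (hap : a * p = a) (hu : (1 - p * t) * u = 1) :
    a * ((1 - t) * (u * p)) = a := by
  have hat : a * (1 - t) = a * (1 - p * t) := by rw [mul_sub, mul_sub, ← mul_assoc, hap]
  calc a * ((1 - t) * (u * p)) = a * (1 - t) * u * p := by simp only [mul_assoc]
    _ = a := by rw [hat, mul_assoc a, hu, mul_one, hap]

theorem mul_mul_one_sub_eq (hap : a * p = a) (hptp : p * t * p = p * t)
    (hu : u * (1 - p * t) = 1) : a * ((u * p) * (1 - t)) = a := by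
  have hpt : p * (1 - t) = (1 - p * t) * p := by rw [mul_sub, sub_mul, mul_one, one_mul, hptp]
  calc a * ((u * p) * (1 - t)) = a * (u * (p * (1 - t))) := by simp only [mul_assoc]
    _ = a := by rw [hpt, ← mul_assoc u, hu, one_mul, hap]

variable {𝕜 : Type*} [Field 𝕜] [Algebra 𝕜 R] {μ : 𝕜}

theorem smul_one_sub_mul_inv_smul (hμ : μ ≠ 0) (x : R) :
    (μ • 1 - t) * (μ⁻¹ • x) = (1 - μ⁻¹ • t) * x := by
  rw [mul_smul_comm, ← smul_mul_assoc, smul_sub, smul_smul, inv_mul_cancel₀ hμ, one_smul]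

theorem inv_smul_mul_smul_one_sub (hμ : μ ≠ 0) (x : R) :
    (μ⁻¹ • x) * (μ • 1 - t) = x * (1 - μ⁻¹ • t) := by
  rw [smul_mul_assoc, ← mul_smul_comm, smul_sub, smul_smul, inv_mul_cancel₀ hμ, one_smul]

end Algebra

theorem aInv_of_mul_eq {A T S : H →L[ℂ] H} (hA0 : A ≠ 0) (hT0 : T ≠ 0) (hS : MemBA A S)
    (hTS : A * (T * S) = A) (hST : A * (S * T) = A) : AInv A T :=
  ⟨hT0, S, fun h => hA0 (by simpa [h] using hTS.symm), hS, hTS, hST⟩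

theorem stmt0 (A T : H →L[ℂ] H) (hA : A.IsPositive) (hA0 : A ≠ 0)
    (hT : MemBA A T) (hclosed : IsClosed (Set.range (⇑A)))
    (lam : ℂ) (hlam : opANorm A T < ‖lam‖) :
    lam ∈ rhoA A T := by
  have hlam_pos : 0 < ‖lam‖ := hT.opANorm_nonneg.trans_lt hlam
  have hlam0 : lam ≠ 0 := norm_pos_iff.1 hlam_pos
  set P := projA A
  set t := lam⁻¹ • T
  have hsum : Summable ((P * t) ^ ·) := by
    refine summable_pow_projA_mul hA hclosed (r := opANorm A T / ‖lam‖)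
      (div_nonneg hT.opANorm_nonneg hlam_pos.le)
      ((div_lt_one hlam_pos).2 hlam) fun x => ?_
    rw [smul_apply, anorm_smul, norm_inv, div_eq_inv_mul, mul_assoc]
    gcongr
    exact hT.anorm_apply_le x
  have hPtP : P * t * P = P * t := by
    rw [mul_smul_comm, smul_mul_assoc, projA_mul_mul_projA hA hT]
  refine aInv_of_mul_eq hA0 (smul_one_sub_ne_zero hA hA0 hT hlam)
    (S := lam⁻¹ • ((∑' n, (P * t) ^ n) * P)) ?_ ?_ ?_
  · rw [← smul_mul_assoc]; exact memBA_mul_projA hA hclosed _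
  · rw [smul_one_sub_mul_inv_smul hlam0]
    exact mul_one_sub_mul_eq (mul_projA hA) hsum.one_sub_mul_tsum_pow
  · rw [inv_smul_mul_smul_one_sub hlam0]
    exact mul_mul_one_sub_eq (mul_projA hA) hPtP hsum.tsum_pow_mul_one_sub
end

section
/- Let T ∈ B_{A^{1/2}}(H) and let S be a bounded operator on H which is the A^{1/2}-adjoint T^⋄ of T; since the closure of the range of A^{1/2} equals the closure of the range of A, S restricts to a bounded operator S₀ on the Hilbert space cl R(A). If λ ∈ ρ_A(T), then the complex conjugate of λ lies in the resolvent set of S₀, i.e., conj(λ)·I − S₀ is invertible in the bounded operators on cl R(A). -/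
variable {H : Type*} [NormedAddCommGroup H] [InnerProductSpace ℂ H] [CompleteSpace H]

/-!
Let `M` be the closure of the range of `A`; it is also the closure of the range of `A^{1/2}`, so
`J := A^{1/2} : H → M` has dense range, and `‖J x‖ = ‖x‖_A`. The defining identity of the
`A^{1/2}`-adjoint says precisely that `S₀^* J = J T`, hence `C := λ - S₀^*` satisfies
`C J = J (λ - T)`. An `A`-inverse `R` of `λ - T` then bounds `C` below on `J(H)` and places `J(H)`
inside the range of `C`. By density `C` is bounded below with dense range, hence invertible, and so
is its adjoint `conj λ - S₀`.
-/

open ContinuousLinearMap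

theorem ContinuousLinearMap.isUnit_of_denseRange_of_bound {𝕜 E α : Type*} [RCLike 𝕜]
    [NormedAddCommGroup E] [NormedSpace 𝕜 E] [CompleteSpace E] (C : E →L[𝕜] E) {j : α → E}
    (hj : DenseRange j) (c : NNReal) (hbound : ∀ a, ‖j a‖ ≤ c * ‖C (j a)‖)
    (hrange : ∀ a, j a ∈ C.range) : IsUnit C := by
  have hanti : AntilipschitzWith c C := C.antilipschitz_of_bound fun m =>
    hj.induction_on m (isClosed_le continuous_norm (by fun_prop)) hbound
  have hdense : C.range.topologicalClosure = ⊤ := by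
    rw [← Submodule.dense_iff_topologicalClosure_eq_top]
    exact hj.mono (Set.range_subset_iff.2 hrange)
  exact isUnit_iff_bijective.2
    ((bijective_iff_dense_range_and_antilipschitz C).2 ⟨hdense, c, hanti⟩)

theorem ContinuousLinearMap.denseRange_codRestrict {𝕜 E F : Type*} [RCLike 𝕜]
    [NormedAddCommGroup E] [NormedSpace 𝕜 E] [NormedAddCommGroup F] [NormedSpace 𝕜 F]
    (T : E →L[𝕜] F) (V : Submodule 𝕜 F) (hT : ∀ x, T x ∈ V)
    (hV : V ≤ T.range.topologicalClosure) : DenseRange (T.codRestrict V hT) := by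
  rw [DenseRange, Topology.IsInducing.subtypeVal.dense_iff]
  intro v
  rw [← Set.range_comp]
  exact hV v.2

section SquareRoot

variable {A sqrtA : H →L[ℂ] H}

theorem inner_apply_self_eq_norm_sq_of_comp_self (hsqrt : IsSelfAdjoint sqrtA)
    (hsq : sqrtA ∘L sqrtA = A) (x : H) : inner ℂ (A x) x = (‖sqrtA x‖ ^ 2 : ℂ) := by
  rw [← hsq, comp_apply, ← adjoint_inner_right, hsqrt.adjoint_eq, inner_self_eq_norm_sq_to_K]
  rfl

theorem anorm_eq_norm_apply_of_comp_self (hsqrt : IsSelfAdjoint sqrtA)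
    (hsq : sqrtA ∘L sqrtA = A) (x : H) : anorm A x = ‖sqrtA x‖ := by
  rw [anorm, inner_apply_self_eq_norm_sq_of_comp_self hsqrt hsq]
  norm_cast
  exact Real.sqrt_sq (norm_nonneg _)

theorem ker_eq_ker_of_comp_self (hsqrt : IsSelfAdjoint sqrtA) (hsq : sqrtA ∘L sqrtA = A) :
    A.ker = sqrtA.ker := by
  ext x
  simp only [LinearMap.mem_ker, coe_coe]
  refine ⟨fun hx => ?_, fun hx => by rw [← hsq, comp_apply, hx, map_zero]⟩
  have := inner_apply_self_eq_norm_sq_of_comp_self hsqrt hsq x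
  rw [hx, inner_zero_left] at this
  simpa using this.symm

theorem closure_range_eq_of_comp_self (hsqrt : IsSelfAdjoint sqrtA) (hsq : sqrtA ∘L sqrtA = A) :
    A.range.topologicalClosure = sqrtA.range.topologicalClosure := by
  have hA : adjoint A = A := by rw [← hsq, adjoint_comp, hsqrt.adjoint_eq]
  rw [← Submodule.orthogonal_orthogonal_eq_closure, ← Submodule.orthogonal_orthogonal_eq_closure,
    orthogonal_range, orthogonal_range, hA, hsqrt.adjoint_eq, ker_eq_ker_of_comp_self hsqrt hsq]

theorem comp_eq_of_comp_eq_of_comp_self (hsqrt : IsSelfAdjoint sqrtA) (hsq : sqrtA ∘L sqrtA = A)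
    {X : H →L[ℂ] H} (hX : A ∘L X = A) : sqrtA ∘L X = sqrtA := by
  ext x
  have : X x - x ∈ A.ker := by simp [← comp_apply, hX]
  rw [ker_eq_ker_of_comp_self hsqrt hsq, LinearMap.mem_ker, map_sub, sub_eq_zero] at this
  exact this

theorem norm_apply_le_of_comp_eq_of_comp_self {R L : H →L[ℂ] H} (hsqrt : IsSelfAdjoint sqrtA)
    (hsq : sqrtA ∘L sqrtA = A) {c : ℝ} (hR : ∀ x, anorm A (R x) ≤ c * anorm A x)
    (hRL : A ∘L (R ∘L L) = A) (z : H) : ‖sqrtA z‖ ≤ c * ‖sqrtA (L z)‖ := by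
  calc ‖sqrtA z‖ = ‖sqrtA (R (L z))‖ := by
        rw [← DFunLike.congr_fun (comp_eq_of_comp_eq_of_comp_self hsqrt hsq hRL) z]
        rfl
    _ ≤ c * ‖sqrtA (L z)‖ := by
        simpa only [anorm_eq_norm_apply_of_comp_self hsqrt hsq] using hR (L z)

end SquareRoot

theorem adjoint_comp_codRestrict_of_isDiamond {sqrtA T S : H →L[ℂ] H} (hsqrt : IsSelfAdjoint sqrtA)
    (hS : IsDiamond sqrtA T S) {V : Submodule ℂ H} [CompleteSpace V] (hV : ∀ x, sqrtA x ∈ V)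
    (S₀ : V →L[ℂ] V) (hS₀ : ∀ x, (S₀ x : H) = S x) :
    adjoint S₀ ∘L sqrtA.codRestrict V hV = sqrtA.codRestrict V hV ∘L T := by
  ext1 z
  refine ext_inner_right ℂ fun u => ?_
  rw [comp_apply, adjoint_inner_left, comp_apply, Submodule.coe_inner, Submodule.coe_inner, hS₀]
  change inner ℂ (sqrtA z) (S u) = inner ℂ (sqrtA (T z)) (u : H)
  rw [← adjoint_inner_right, hsqrt.adjoint_eq, ← comp_apply sqrtA S, hS.1, comp_apply,
    adjoint_inner_right, ← adjoint_inner_left, hsqrt.adjoint_eq]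

theorem stmt3_general (A sqrtA T S : H →L[ℂ] H)
    (hsqrt : sqrtA.IsPositive) (hsq : sqrtA.comp sqrtA = A)
    (hS : IsDiamond sqrtA T S)
    (S₀ : ((LinearMap.range (A : H →ₗ[ℂ] H)).topologicalClosure : Submodule ℂ H) →L[ℂ]
      ((LinearMap.range (A : H →ₗ[ℂ] H)).topologicalClosure : Submodule ℂ H))
    (hS₀ : ∀ x : ((LinearMap.range (A : H →ₗ[ℂ] H)).topologicalClosure : Submodule ℂ H), (S₀ x : H) = S x)
    (lam : ℂ) (hlam : lam ∈ rhoA A T) :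
    (starRingEnd ℂ) lam ∉ spectrum ℂ S₀ := by
  obtain ⟨-, R, -, ⟨c, hc, hR⟩, hLR, hRL⟩ := hlam
  have hsa := hsqrt.isSelfAdjoint
  have hM := closure_range_eq_of_comp_self hsa hsq
  have hV (x : H) : sqrtA x ∈ A.range.topologicalClosure :=
    hM ▸ Submodule.le_topologicalClosure _ ⟨x, rfl⟩
  have : CompleteSpace A.range.topologicalClosure :=
    (Submodule.isClosed_topologicalClosure _).completeSpace_coe
  set j := sqrtA.codRestrict _ hV
  set C := lam • 1 - adjoint S₀
  have hCj : C ∘L j = j ∘L (lam • 1 - T) := by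
    rw [sub_comp, adjoint_comp_codRestrict_of_isDiamond hsa hS hV S₀ hS₀, comp_sub]
    simp only [smul_comp, comp_smul, one_def, id_comp, comp_id]
    rfl
  have hC : IsUnit C := by
    refine C.isUnit_of_denseRange_of_bound (sqrtA.denseRange_codRestrict _ hV hM.le) ⟨c, hc.le⟩
      (fun z => ?_) (fun z => ⟨j (R z), ?_⟩)
    · rw [← comp_apply C, hCj]
      exact norm_apply_le_of_comp_eq_of_comp_self hsa hsq hR hRL z
    · rw [coe_coe, ← comp_apply C, hCj]
      exact Subtype.ext (DFunLike.congr_fun (comp_eq_of_comp_eq_of_comp_self hsa hsq hLR) z)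
  rw [spectrum.notMem_iff, Algebra.algebraMap_eq_smul_one]
  convert hC.star
  rw [star_sub, star_smul, star_one, star_eq_adjoint, adjoint_adjoint]
  rfl

theorem stmt3 (A sqrtA T S : H →L[ℂ] H) (hA : A.IsPositive) (hA0 : A ≠ 0)
    (hsqrt : sqrtA.IsPositive) (hsq : sqrtA.comp sqrtA = A)
    (hT : MemBA A T) (hS : IsDiamond sqrtA T S)
    (S₀ : ((LinearMap.range (A : H →ₗ[ℂ] H)).topologicalClosure : Submodule ℂ H) →L[ℂ]
      ((LinearMap.range (A : H →ₗ[ℂ] H)).topologicalClosure : Submodule ℂ H))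
    (hS₀ : ∀ x : ((LinearMap.range (A : H →ₗ[ℂ] H)).topologicalClosure : Submodule ℂ H), (S₀ x : H) = S x)
    (lam : ℂ) (hlam : lam ∈ rhoA A T) :
    (starRingEnd ℂ) lam ∉ spectrum ℂ S₀ :=
  stmt3_general A sqrtA T S hsqrt hsq hS S₀ hS₀ lam hlam
end

section
/- Let T ∈ B_{A^{1/2}}(H) and let S ∈ B_{A^{1/2}}(H) be the A^{1/2}-adjoint T^⋄ of T. Let T_eff denote the restriction of PTP to the Hilbert space cl R(A) (this subspace is invariant under PTP). Then the spectral radius of T_eff equals r_A(S), and r_A(S) ≤ sup{|λ| : λ ∈ σ_A(T)}. -/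
variable {H : Type*} [NormedAddCommGroup H] [InnerProductSpace ℂ H] [CompleteSpace H]

/-!
Write `K = cl R(A)` and `C(X) = P X|_K` for the compression of an operator to `K`. Since
`A^{1/2}` is self-adjoint, `Kᗮ = ker A = ker A^{1/2}`, so every operator of `B_{A^{1/2}}(H)`
leaves `Kᗮ` invariant; on such operators `C` is multiplicative, and `T_eff = C(T)`.
The adjoint of a compression is the compression of the adjoint, and
`A^{1/2} S^n = (T^n)^* A^{1/2}` with `R(A^{1/2})` dense in `K`, so
`‖S^n‖_A = ‖C(T^n)^*‖ = ‖T_eff^n‖` and Gelfand's formula gives `r(T_eff) = r_A(S)`.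
If `V` is an `A`-inverse of `λ - T`, then `A (λ - T) V = A` makes `C(λ - T)` and `C(V)` mutually
inverse, so `σ(T_eff) ⊆ σ_A(T)`; and `σ_A(T)` is bounded because `λ - T` is `A`-invertible as soon
as `|λ|` exceeds both `‖T‖` and a constant `c` with `‖T x‖_A ≤ c ‖x‖_A`.
-/

open ContinuousLinearMap

noncomputable def compression (K : Submodule ℂ H) [K.HasOrthogonalProjection]
    (X : H →L[ℂ] H) : K →L[ℂ] K :=
  K.orthogonalProjectionOnto ∘L X ∘L K.subtypeL

section Compression

omit [CompleteSpace H]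
variable {K : Submodule ℂ H} [K.HasOrthogonalProjection]

@[simp]
lemma compression_apply (X : H →L[ℂ] H) (z : K) :
    compression K X z = K.orthogonalProjectionOnto (X z) := rfl

lemma compression_one : compression K 1 = 1 := by
  ext z
  simp

lemma compression_smul_one_sub (c : ℂ) (X : H →L[ℂ] H) :
    compression K (c • 1 - X) = algebraMap ℂ (K →L[ℂ] K) c - compression K X := by
  ext z
  simp [Algebra.algebraMap_eq_smul_one]

lemma compression_mul {X : H →L[ℂ] H} (hX : Set.MapsTo X Kᗮ Kᗮ) (Y : H →L[ℂ] H) :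
    compression K (X * Y) = compression K X * compression K Y := by
  ext z
  -- `Y z` and its projection differ by a vector of `Kᗮ`, which `X` keeps in `Kᗮ`
  have hperp : X (Y z - K.orthogonalProjectionOnto (Y z)) ∈ Kᗮ :=
    hX (K.sub_starProjection_mem_orthogonal (Y z))
  have := K.orthogonalProjectionOnto_apply_of_mem_orthogonal hperp
  rw [map_sub, map_sub, sub_eq_zero] at this
  simpa using congrArg Subtype.val this

lemma compression_pow {X : H →L[ℂ] H} (hX : Set.MapsTo X Kᗮ Kᗮ) (n : ℕ) :
    compression K (X ^ n) = compression K X ^ n := by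
  induction n with
  | zero => exact compression_one
  | succ n ih => rw [pow_succ', compression_mul hX, ih, pow_succ']

lemma coe_compression_of_mapsTo {X : H →L[ℂ] H} (hX : Set.MapsTo X K K) (z : K) :
    (compression K X z : H) = X z :=
  congrArg Subtype.val (K.orthogonalProjectionOnto_mem_subspace_eq_self ⟨X z, hX z.2⟩)

lemma compression_eq_of_sub_mem_orthogonal {X Y : H →L[ℂ] H} (h : ∀ x, X x - Y x ∈ Kᗮ) :
    compression K X = compression K Y := by
  ext z
  have := K.orthogonalProjectionOnto_apply_of_mem_orthogonal (h z)
  rw [map_sub, sub_eq_zero] at this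
  simp [this]

end Compression

section Adjoint

variable {K : Submodule ℂ H} [CompleteSpace K]

lemma adjoint_compression (X : H →L[ℂ] H) :
    adjoint (compression K X) = compression K (adjoint X) := by
  simp only [compression, adjoint_comp, K.adjoint_subtypeL,
    K.adjoint_orthogonalProjectionOnto, comp_assoc]

lemma Set.MapsTo.adjoint_of_orthogonal {X : H →L[ℂ] H} (hX : Set.MapsTo X Kᗮ Kᗮ) :
    Set.MapsTo (adjoint X) K K := by
  intro z hz
  rw [SetLike.mem_coe, ← K.orthogonal_orthogonal, Submodule.mem_orthogonal]
  intro w hw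
  rw [adjoint_inner_right]
  exact Submodule.inner_left_of_mem_orthogonal hz (hX hw)

end Adjoint

section SquareRoot

variable {A B : H →L[ℂ] H}

lemma anorm_eq_norm (hB : IsSelfAdjoint B) (hBA : B ∘L B = A) (x : H) :
    anorm A x = ‖B x‖ := by
  rw [anorm, ← hBA, comp_apply, ← adjoint_inner_right, hB.adjoint_eq, inner_self_eq_norm_sq,
    Real.sqrt_sq (norm_nonneg _)]

lemma ker_eq_ker_of_comp_self_s4 (hB : IsSelfAdjoint B) (hBA : B ∘L B = A) : A.ker = B.ker := by
  ext x
  simp only [LinearMap.mem_ker, coe_coe]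
  refine ⟨fun hx ↦ ?_, fun hx ↦ by rw [← hBA, comp_apply, hx, map_zero]⟩
  have : anorm A x = 0 := by simp [anorm, hx]
  simpa [anorm_eq_norm hB hBA] using this

lemma isSelfAdjoint_of_comp_self (hB : IsSelfAdjoint B) (hBA : B ∘L B = A) : IsSelfAdjoint A := by
  rw [← hBA, isSelfAdjoint_iff', adjoint_comp, hB.adjoint_eq]

lemma orthogonal_closure_range_eq_ker_s4 (hA : IsSelfAdjoint A) :
    A.range.topologicalClosureᗮ = A.ker := by
  rw [Submodule.orthogonal_closure, orthogonal_range, hA.adjoint_eq]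

lemma closure_range_eq_of_comp_self_s4 (hB : IsSelfAdjoint B) (hBA : B ∘L B = A) :
    A.range.topologicalClosure = B.range.topologicalClosure := by
  rw [← Submodule.orthogonal_orthogonal_eq_closure, ← Submodule.orthogonal_orthogonal_eq_closure,
    orthogonal_range, orthogonal_range, (isSelfAdjoint_of_comp_self hB hBA).adjoint_eq,
    hB.adjoint_eq, ker_eq_ker_of_comp_self_s4 hB hBA]

lemma MemBA.mapsTo_ker {X : H →L[ℂ] H} (hB : IsSelfAdjoint B) (hBA : B ∘L B = A)
    (hX : MemBA A X) : Set.MapsTo X A.ker A.ker := by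
  obtain ⟨c, -, hc⟩ := hX
  intro v hv
  simp only [SetLike.mem_coe, ker_eq_ker_of_comp_self_s4 hB hBA, LinearMap.mem_ker, coe_coe] at hv ⊢
  simpa [anorm_eq_norm hB hBA, hv] using hc v

end SquareRoot

section ANorm

variable {A B : H →L[ℂ] H}

lemma apply_mem_closure_range (hB : IsSelfAdjoint B) (hBA : B ∘L B = A) (x : H) :
    B x ∈ A.range.topologicalClosure := by
  rw [closure_range_eq_of_comp_self_s4 hB hBA]
  exact Submodule.le_topologicalClosure _ ⟨x, rfl⟩

lemma opANorm_eq_norm_compression (hB : IsSelfAdjoint B) (hBA : B ∘L B = A) {X Y : H →L[ℂ] H}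
    (hY : Set.MapsTo Y A.range.topologicalClosure A.range.topologicalClosure)
    (hXY : B ∘L X = Y ∘L B) :
    opANorm A X = ‖compression A.range.topologicalClosure Y‖ := by
  set K := A.range.topologicalClosure
  set C := compression K Y
  have hC : ∀ x, (C ⟨B x, apply_mem_closure_range hB hBA x⟩ : H) = B (X x) := fun x ↦
    (coe_compression_of_mapsTo hY _).trans (DFunLike.congr_fun hXY x).symm
  have hmem : ‖C‖ ∈ {c : ℝ | 0 ≤ c ∧ ∀ x, anorm A (X x) ≤ c * anorm A x} := by
    refine ⟨C.opNorm_nonneg, fun x ↦ ?_⟩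
    rw [anorm_eq_norm hB hBA, anorm_eq_norm hB hBA, ← hC]
    exact C.le_opNorm _
  refine le_antisymm (csInf_le ⟨0, fun c hc ↦ hc.1⟩ hmem) (le_csInf ⟨_, hmem⟩ ?_)
  rintro c ⟨hc0, hc⟩
  refine C.opNorm_le_bound hc0 fun z ↦ ?_
  -- a closed condition, which holds on the dense subset `R(A^{1/2})` of `K`
  have hclosed : IsClosed {v : H | ‖C (K.orthogonalProjectionOnto v)‖ ≤ c * ‖v‖} :=
    isClosed_le (by fun_prop) (by fun_prop)
  have hrange : Set.range B ⊆ {v : H | ‖C (K.orthogonalProjectionOnto v)‖ ≤ c * ‖v‖} := by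
    rintro _ ⟨x, rfl⟩
    have hP : K.orthogonalProjectionOnto (B x) = ⟨B x, apply_mem_closure_range hB hBA x⟩ :=
      K.orthogonalProjectionOnto_mem_subspace_eq_self ⟨B x, _⟩
    simpa [hP, hC, anorm_eq_norm hB hBA] using hc x
  have hz : (z : H) ∈ closure (Set.range B) := by
    have hzK : (z : H) ∈ B.range.topologicalClosure := closure_range_eq_of_comp_self_s4 hB hBA ▸ z.2
    rwa [← SetLike.mem_coe, Submodule.topologicalClosure_coe, LinearMap.coe_range] at hzK
  simpa using closure_minimal hrange hclosed hz

end ANorm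

lemma spectralRadius_eq_iInf_norm_pow {𝔄 : Type*} [NormedRing 𝔄] [NormedAlgebra ℂ 𝔄]
    [CompleteSpace 𝔄] [NormOneClass 𝔄] (a : 𝔄) :
    spectralRadius ℂ a = ENNReal.ofReal (⨅ n : ℕ+, ‖a ^ (n : ℕ)‖ ^ ((n : ℕ) : ℝ)⁻¹) := by
  rw [ENNReal.ofReal_iInf]
  refine le_antisymm (le_iInf fun n ↦ ?_) ?_
  · obtain ⟨m, hm⟩ : ∃ m : ℕ, (n : ℕ) = m + 1 := ⟨(n : ℕ) - 1, (Nat.succ_pred_eq_of_pos n.2).symm⟩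
    have := spectrum.spectralRadius_le_pow_nnnorm_pow_one_div ℂ a m
    rw [nnnorm_one, ENNReal.coe_one, ENNReal.one_rpow, mul_one] at this
    rw [← ENNReal.ofReal_rpow_of_nonneg (norm_nonneg _) (by positivity), ofReal_norm,
      enorm_eq_nnnorm]
    simpa [hm, one_div] using this
  · refine ge_of_tendsto (spectrum.pow_norm_pow_one_div_tendsto_nhds_spectralRadius a) ?_
    filter_upwards [Filter.eventually_ge_atTop 1] with k hk
    exact iInf_le_of_le ⟨k, hk⟩ (by simp [one_div])

lemma spectralRadius_le_ofReal_sSup {𝔄 : Type*} [Ring 𝔄] [Algebra ℂ 𝔄] {a : 𝔄} {s : Set ℂ}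
    (hs : spectrum ℂ a ⊆ s) (hbdd : BddAbove ((fun z : ℂ ↦ ‖z‖) '' s)) :
    spectralRadius ℂ a ≤ ENNReal.ofReal (sSup ((fun z : ℂ ↦ ‖z‖) '' s)) :=
  iSup₂_le fun k hk ↦ by
    rw [← enorm_eq_nnnorm, ← ofReal_norm]
    exact ENNReal.ofReal_le_ofReal (le_csSup hbdd ⟨k, hs hk, rfl⟩)

section ASpectrum

variable {A B : H →L[ℂ] H}

lemma compression_eq_of_comp_eq (hA : IsSelfAdjoint A) {X Y : H →L[ℂ] H}
    (h : A ∘L X = A ∘L Y) :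
    compression A.range.topologicalClosure X = compression A.range.topologicalClosure Y := by
  refine compression_eq_of_sub_mem_orthogonal fun x ↦ ?_
  rw [orthogonal_closure_range_eq_ker_s4 hA, LinearMap.mem_ker, coe_coe, map_sub, sub_eq_zero]
  exact DFunLike.congr_fun h x

lemma AInv.isUnit_compression (hB : IsSelfAdjoint B) (hBA : B ∘L B = A) {X : H →L[ℂ] H}
    (hX : Set.MapsTo X A.ker A.ker) (h : AInv A X) :
    IsUnit (compression A.range.topologicalClosure X) := by
  obtain ⟨-, Y, -, hY, hXY, hYX⟩ := h
  have hA := isSelfAdjoint_of_comp_self hB hBA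
  have hY := hY.mapsTo_ker hB hBA
  rw [← orthogonal_closure_range_eq_ker_s4 hA] at hX hY
  refine ⟨⟨compression _ X, compression _ Y, ?_, ?_⟩, rfl⟩
  · rw [← compression_mul hX, ← compression_one]
    exact compression_eq_of_comp_eq hA hXY
  · rw [← compression_mul hY, ← compression_one]
    exact compression_eq_of_comp_eq hA hYX

lemma spectrum_compression_subset_sigmaA (hB : IsSelfAdjoint B) (hBA : B ∘L B = A)
    {T : H →L[ℂ] H} (hT : MemBA A T) :
    spectrum ℂ (compression A.range.topologicalClosure T) ⊆ sigmaA A T := by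
  intro lam hlam hrho
  have hker : Set.MapsTo (lam • (1 : H →L[ℂ] H) - T) A.ker A.ker := fun v hv ↦ by
    rw [sub_apply, smul_apply, one_apply_eq_self]
    exact A.ker.sub_mem (A.ker.smul_mem lam hv) (hT.mapsTo_ker hB hBA hv)
  rw [spectrum.mem_iff, ← compression_smul_one_sub] at hlam
  exact hlam (hrho.isUnit_compression hB hBA hker)

omit [CompleteSpace H] in
lemma memBA_ringInverse {X : H →L[ℂ] H} (hX : IsUnit X) {m : ℝ} (hm : 0 < m)
    (h : ∀ y, m * anorm A y ≤ anorm A (X y)) : MemBA A (Ring.inverse X) := by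
  refine ⟨m⁻¹, inv_pos.2 hm, fun x ↦ ?_⟩
  have := h (Ring.inverse X x)
  rw [← mul_apply_eq_comp, Ring.mul_inverse_cancel X hX, one_apply_eq_self] at this
  rwa [le_inv_mul_iff₀ hm]

omit [CompleteSpace H] in
lemma aInv_of_isUnit [Nontrivial H] {X : H →L[ℂ] H} (hX : IsUnit X)
    (h : MemBA A (Ring.inverse X)) : AInv A X :=
  ⟨hX.ne_zero, Ring.inverse X, hX.ringInverse.ne_zero, h,
    show A * (X * Ring.inverse X) = A by rw [Ring.mul_inverse_cancel X hX, mul_one],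
    show A * (Ring.inverse X * X) = A by rw [Ring.inverse_mul_cancel X hX, mul_one]⟩

lemma mul_anorm_le_anorm_smul_one_sub (hB : IsSelfAdjoint B) (hBA : B ∘L B = A)
    {T : H →L[ℂ] H} {c : ℝ} (hc : ∀ x, anorm A (T x) ≤ c * anorm A x) (lam : ℂ) (y : H) :
    (‖lam‖ - c) * anorm A y ≤ anorm A ((lam • (1 : H →L[ℂ] H) - T) y) := by
  simp only [anorm_eq_norm hB hBA] at hc ⊢
  calc (‖lam‖ - c) * ‖B y‖ = ‖lam • B y‖ - c * ‖B y‖ := by rw [norm_smul]; ring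
    _ ≤ ‖lam • B y‖ - ‖B (T y)‖ := by linarith [hc y]
    _ ≤ ‖lam • B y - B (T y)‖ := norm_sub_norm_le _ _
    _ = ‖B ((lam • (1 : H →L[ℂ] H) - T) y)‖ := by simp

lemma mem_rhoA_of_norm_lt [Nontrivial H] (hB : IsSelfAdjoint B) (hBA : B ∘L B = A)
    {T : H →L[ℂ] H} {c : ℝ} (hc : ∀ x, anorm A (T x) ≤ c * anorm A x) {lam : ℂ}
    (hTlam : ‖T‖ < ‖lam‖) (hclam : c < ‖lam‖) : lam ∈ rhoA A T := by
  have hU : IsUnit (lam • (1 : H →L[ℂ] H) - T) := by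
    rw [← Algebra.algebraMap_eq_smul_one, ← spectrum.notMem_iff]
    exact fun hmem ↦ (spectrum.norm_le_norm_of_mem hmem).not_gt hTlam
  exact aInv_of_isUnit hU <| memBA_ringInverse hU (sub_pos.2 hclam)
    (mul_anorm_le_anorm_smul_one_sub hB hBA hc lam)

lemma bddAbove_norm_sigmaA [Nontrivial H] (hB : IsSelfAdjoint B) (hBA : B ∘L B = A)
    {T : H →L[ℂ] H} (hT : MemBA A T) : BddAbove ((fun z : ℂ ↦ ‖z‖) '' sigmaA A T) := by
  obtain ⟨c, -, hc⟩ := hT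
  refine ⟨max ‖T‖ c, ?_⟩
  rintro _ ⟨lam, hlam, rfl⟩
  by_contra! hlt
  exact hlam (mem_rhoA_of_norm_lt hB hBA hc ((le_max_left _ _).trans_lt hlt)
    ((le_max_right _ _).trans_lt hlt))

end ASpectrum

omit [CompleteSpace H] in
lemma nontrivial_closure_range {A : H →L[ℂ] H} (hA0 : A ≠ 0) :
    Nontrivial A.range.topologicalClosure := by
  rw [Submodule.nontrivial_iff_ne_bot, ← bot_lt_iff_ne_bot]
  exact (bot_lt_iff_ne_bot.2 (LinearMap.range_eq_bot.not.2 (coe_injective.ne hA0))).trans_le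
    (Submodule.le_topologicalClosure _)

theorem stmt4_general (A sqrtA T S : H →L[ℂ] H) (hA0 : A ≠ 0)
    (hsqrt : sqrtA.IsPositive) (hsq : sqrtA.comp sqrtA = A)
    (hT : MemBA A T) (hS : IsDiamond sqrtA T S)
    (Teff : ((LinearMap.range (A : H →ₗ[ℂ] H)).topologicalClosure : Submodule ℂ H) →L[ℂ]
      ((LinearMap.range (A : H →ₗ[ℂ] H)).topologicalClosure : Submodule ℂ H))
    (hTeff : ∀ x : ((LinearMap.range (A : H →ₗ[ℂ] H)).topologicalClosure : Submodule ℂ H),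
      (Teff x : H) = projA A (T (projA A (x : H)))) :
    spectralRadius ℂ Teff = ENNReal.ofReal (rA A S) ∧ rA A S ≤ supSpecA A T := by
  have hB := hsqrt.isSelfAdjoint
  have : Nontrivial A.range.topologicalClosure := nontrivial_closure_range hA0
  have : Nontrivial H := A.range.topologicalClosure.subtype_injective.nontrivial
  have hTK : Set.MapsTo T A.range.topologicalClosureᗮ A.range.topologicalClosureᗮ := by
    rw [orthogonal_closure_range_eq_ker_s4 (isSelfAdjoint_of_comp_self hB hsq)]
    exact hT.mapsTo_ker hB hsq
  have hTeff_eq : Teff = compression A.range.topologicalClosure T := by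
    ext x
    rw [hTeff, projA, comp_apply, comp_apply,
      Submodule.orthogonalProjectionOnto_mem_subspace_eq_self]
    rfl
  have hnorm : ∀ n : ℕ, opANorm A (S ^ n) = ‖Teff ^ n‖ := fun n ↦ by
    have hTnK : Set.MapsTo (T ^ n) A.range.topologicalClosureᗮ A.range.topologicalClosureᗮ := by
      rw [FunLike.coe_pow_eq_iterate]; exact hTK.iterate n
    have hSn : sqrtA ∘L S ^ n = adjoint (T ^ n) ∘L sqrtA := by
      rw [← star_eq_adjoint, star_pow, star_eq_adjoint]
      exact SemiconjBy.pow_right hS.1 n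
    rw [opANorm_eq_norm_compression hB hsq hTnK.adjoint_of_orthogonal hSn, ← adjoint_compression,
      LinearIsometryEquiv.norm_map, hTeff_eq, compression_pow hTK]
  have hrad : spectralRadius ℂ Teff = ENNReal.ofReal (rA A S) := by
    refine (spectralRadius_eq_iInf_norm_pow Teff).trans ?_
    simp only [rA, hnorm]
  refine ⟨hrad, (ENNReal.ofReal_le_ofReal_iff ?_).1 (hrad ▸ ?_)⟩
  · exact Real.sSup_nonneg (by rintro _ ⟨z, -, rfl⟩; exact norm_nonneg z)
  · exact spectralRadius_le_ofReal_sSup (hTeff_eq ▸ spectrum_compression_subset_sigmaA hB hsq hT)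
      (bddAbove_norm_sigmaA hB hsq hT)

theorem stmt4 (A sqrtA T S : H →L[ℂ] H) (hA : A.IsPositive) (hA0 : A ≠ 0)
    (hsqrt : sqrtA.IsPositive) (hsq : sqrtA.comp sqrtA = A)
    (hT : MemBA A T) (hSmem : MemBA A S) (hS : IsDiamond sqrtA T S)
    (Teff : ((LinearMap.range (A : H →ₗ[ℂ] H)).topologicalClosure : Submodule ℂ H) →L[ℂ]
      ((LinearMap.range (A : H →ₗ[ℂ] H)).topologicalClosure : Submodule ℂ H))
    (hTeff : ∀ x : ((LinearMap.range (A : H →ₗ[ℂ] H)).topologicalClosure : Submodule ℂ H),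
      (Teff x : H) = projA A (T (projA A (x : H)))) :
    spectralRadius ℂ Teff = ENNReal.ofReal (rA A S) ∧ rA A S ≤ supSpecA A T :=
  stmt4_general A sqrtA T S hA0 hsqrt hsq hT hS Teff hTeff
end

section
/- Let T ∈ B_{A^{1/2}}(H), let S ∈ B_{A^{1/2}}(H) be the A^{1/2}-adjoint T^⋄ of T, and let S' be the A^{1/2}-adjoint S^⋄ of S. Then the operator norm of S' equals ‖S‖_A, i.e., ‖(T^⋄)^⋄‖ = ‖T^⋄‖_A. -/
variable {H : Type*} [NormedAddCommGroup H] [InnerProductSpace ℂ H] [CompleteSpace H]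

/-!
Taking adjoints in `A^{1/2} S' = S* A^{1/2}` gives `S'* A^{1/2} = A^{1/2} S`, so
`‖S x‖_A = ‖S'* (A^{1/2} x)‖`. Since the range of `S'` lies in the closure of the range of
`A^{1/2}`, the adjoint `S'*` vanishes on the orthogonal complement of that range, so its norm is
already attained on the range of `A^{1/2}`: `‖S'*‖ = ‖S‖_A`. Finally `‖S'‖ = ‖S'*‖`.
-/

open ContinuousLinearMap

section

variable {𝕜 E F : Type*} [RCLike 𝕜]

theorem ContinuousLinearMap.norm_apply_le_of_mem_closure [SeminormedAddCommGroup E]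
    [SeminormedAddCommGroup F] [NormedSpace 𝕜 E] [NormedSpace 𝕜 F] (B : E →L[𝕜] F)
    {s : Set E} {c : ℝ} (hs : ∀ v ∈ s, ‖B v‖ ≤ c * ‖v‖) {v : E} (hv : v ∈ closure s) :
    ‖B v‖ ≤ c * ‖v‖ :=
  closure_minimal hs (isClosed_le B.continuous.norm (continuous_const.mul continuous_norm)) hv

variable [NormedAddCommGroup E] [InnerProductSpace 𝕜 E] [NormedAddCommGroup F]
  [InnerProductSpace 𝕜 F]

theorem ContinuousLinearMap.opNorm_le_of_orthogonal_le_ker (K : Submodule 𝕜 E)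
    [K.HasOrthogonalProjection] (B : E →L[𝕜] F) {c : ℝ} (hc : 0 ≤ c)
    (hker : Kᗮ ≤ B.ker) (hK : ∀ y ∈ K, ‖B y‖ ≤ c * ‖y‖) : ‖B‖ ≤ c := by
  refine B.opNorm_le_bound hc fun u => ?_
  have hproj : B u = B (K.starProjection u) := by
    rw [← sub_eq_zero, ← map_sub]
    exact hker (K.sub_starProjection_mem_orthogonal u)
  calc ‖B u‖ = ‖B (K.starProjection u)‖ := by rw [hproj]
    _ ≤ c * ‖K.starProjection u‖ := hK _ (K.starProjection_apply_mem u)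
    _ ≤ c * ‖u‖ := mul_le_mul_of_nonneg_left (K.norm_starProjection_apply_le u) hc

theorem ContinuousLinearMap.orthogonal_le_ker_adjoint [CompleteSpace E] [CompleteSpace F]
    (T : E →L[𝕜] F) {K : Submodule 𝕜 F} (h : T.range ≤ K) :
    Kᗮ ≤ (adjoint T).ker :=
  T.orthogonal_range ▸ Submodule.orthogonal_le h

theorem ContinuousLinearMap.isLeast_norm_of_orthogonal_range_le_ker [CompleteSpace F]
    (R : E →L[𝕜] F) (B : F →L[𝕜] E) (hker : R.rangeᗮ ≤ B.ker) :
    IsLeast {c : ℝ | 0 ≤ c ∧ ∀ x, ‖B (R x)‖ ≤ c * ‖R x‖} ‖B‖ := by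
  refine ⟨⟨norm_nonneg B, fun x => B.le_opNorm (R x)⟩, fun c ⟨hc, hbound⟩ => ?_⟩
  refine B.opNorm_le_of_orthogonal_le_ker R.range.topologicalClosure hc
    (R.range.orthogonal_closure ▸ hker) fun y hy => ?_
  rw [← SetLike.mem_coe, Submodule.topologicalClosure_coe, LinearMap.coe_range, coe_coe] at hy
  exact B.norm_apply_le_of_mem_closure (by rintro _ ⟨x, rfl⟩; exact hbound x) hy

end

theorem anorm_eq_norm_apply {A R : H →L[ℂ] H} (hR : IsSelfAdjoint R) (hRA : R ∘L R = A)
    (x : H) : anorm A x = ‖R x‖ := by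
  rw [anorm, ← hRA, comp_apply, ← coe_coe, hR.isSymmetric, coe_coe, inner_self_eq_norm_sq,
    Real.sqrt_sq (norm_nonneg _)]

namespace IsDiamond

variable {R S S' : H →L[ℂ] H}

theorem adjoint_comp_eq_comp (hR : IsSelfAdjoint R) (h : IsDiamond R S S') :
    adjoint S' ∘L R = R ∘L S := by
  simpa only [ContinuousLinearMap.adjoint_comp, adjoint_adjoint, hR.adjoint_eq] using
    congr(adjoint $(h.1))

theorem orthogonal_range_le_ker_adjoint (h : IsDiamond R S S') :
    R.rangeᗮ ≤ (adjoint S').ker := by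
  rw [← R.range.orthogonal_closure]
  refine S'.orthogonal_le_ker_adjoint ?_
  rintro _ ⟨x, rfl⟩
  rw [← SetLike.mem_coe, Submodule.topologicalClosure_coe, LinearMap.coe_range, coe_coe]
  exact h.2 ⟨x, rfl⟩

end IsDiamond

theorem stmt5_general (A sqrtA S S' : H →L[ℂ] H)
    (hsqrt : sqrtA.IsPositive) (hsq : sqrtA.comp sqrtA = A)
    (hS' : IsDiamond sqrtA S S') :
    ‖S'‖ = opANorm A S := by
  have hR := hsqrt.isSelfAdjoint
  have hS'R (x : H) : adjoint S' (sqrtA x) = sqrtA (S x) :=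
    congr($(hS'.adjoint_comp_eq_comp hR) x)
  have hleast :=
    sqrtA.isLeast_norm_of_orthogonal_range_le_ker _ hS'.orthogonal_range_le_ker_adjoint
  simp only [hS'R, ← anorm_eq_norm_apply hR hsq] at hleast
  rw [opANorm, hleast.csInf_eq, LinearIsometryEquiv.norm_map]

theorem stmt5 (A sqrtA T S S' : H →L[ℂ] H) (hA : A.IsPositive) (hA0 : A ≠ 0)
    (hsqrt : sqrtA.IsPositive) (hsq : sqrtA.comp sqrtA = A)
    (hT : MemBA A T) (hSmem : MemBA A S)
    (hS : IsDiamond sqrtA T S) (hS' : IsDiamond sqrtA S S') :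
    ‖S'‖ = opANorm A S :=
  stmt5_general A sqrtA S S' hsqrt hsq hS'
end

section
/- Let T ∈ B_{A^{1/2}}(H) satisfy TA^{1/2} = A^{1/2}T, and let S ∈ B_{A^{1/2}}(H) be the A^{1/2}-adjoint T^⋄ of T. Then sup{|λ| : λ ∈ σ_A(S)} = r_A(S). -/
/-!
Let `K` be the closure of the range of `A^{1/2}` and `ψ : H → K` the corestriction of `A^{1/2}`,
so that `‖x‖_A = ‖ψ x‖` and `ψ` has dense range. Since `T*` commutes with `A^{1/2}`, it leaves `K`
invariant, and `A^{1/2} S = T* A^{1/2}` says that `ψ` intertwines `S` with the restriction `B` of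
`T*` to `K`. Density then gives `‖S^n‖_A = ‖B^n‖`. An `A`-inverse of `λ - S` bounds `λ - B` from
below and gives it dense range, so `λ - B` is invertible; conversely `(λ - B)⁻¹` commutes with
`A^{1/2}|_K` and therefore lifts, through the orthogonal projection onto `K`, to an `A`-inverse of
`λ - S`. Hence `σ_A(S) = σ(B)` and `r_A(S) = r(B)`, and Gelfand's formula for `B` concludes.
-/

variable {H : Type*} [NormedAddCommGroup H] [InnerProductSpace ℂ H] [CompleteSpace H]

open Filter Topology ContinuousLinearMap
open scoped NNReal ENNReal InnerProductSpace

theorem spectrum.sSup_norm_eq_iInf_norm_pow_rpow_inv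
    {𝔸 : Type*} [NormedRing 𝔸] [NormedAlgebra ℂ 𝔸] [CompleteSpace 𝔸] [NormOneClass 𝔸] (a : 𝔸) :
    sSup ((fun z : ℂ => ‖z‖) '' spectrum ℂ a) = ⨅ n : ℕ+, ‖a ^ (n : ℕ)‖ ^ ((n : ℕ) : ℝ)⁻¹ := by
  have : Nontrivial 𝔸 := NormOneClass.nontrivial
  obtain ⟨z₀, hz₀, hz₀r⟩ := spectrum.exists_nnnorm_eq_spectralRadius a
  have hmax : IsGreatest ((fun z : ℂ => ‖z‖) '' spectrum ℂ a) ‖z₀‖ := by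
    refine ⟨⟨z₀, hz₀, rfl⟩, ?_⟩
    rintro _ ⟨z, hz, rfl⟩
    have : (‖z‖₊ : ℝ≥0∞) ≤ ‖z₀‖₊ := hz₀r ▸ le_iSup₂ (α := ℝ≥0∞) z hz
    exact_mod_cast this
  have hle : ∀ n : ℕ+, ‖z₀‖ ≤ ‖a ^ (n : ℕ)‖ ^ ((n : ℕ) : ℝ)⁻¹ := by
    intro n
    have hpow : ‖z₀‖ ^ (n : ℕ) ≤ ‖a ^ (n : ℕ)‖ := by
      simpa using spectrum.norm_le_norm_of_mem (spectrum.pow_mem_pow a n hz₀)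
    calc ‖z₀‖ = (‖z₀‖ ^ (n : ℕ)) ^ ((n : ℕ) : ℝ)⁻¹ :=
          (Real.pow_rpow_inv_natCast (norm_nonneg _) n.ne_zero).symm
      _ ≤ _ := by gcongr
  have hlim : Tendsto (fun n : ℕ => ‖a ^ n‖ ^ (n : ℝ)⁻¹) atTop (𝓝 ‖z₀‖) := by
    have h := spectrum.pow_norm_pow_one_div_tendsto_nhds_spectralRadius a
    rw [← hz₀r, ← ENNReal.ofReal_coe_nnreal, coe_nnnorm] at h
    have h' := (ENNReal.tendsto_toReal ENNReal.ofReal_ne_top).comp h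
    simpa [Function.comp_def, ENNReal.toReal_ofReal, Real.rpow_nonneg] using h'
  have hbdd : BddBelow (Set.range fun n : ℕ+ => ‖a ^ (n : ℕ)‖ ^ ((n : ℕ) : ℝ)⁻¹) :=
    ⟨0, by rintro _ ⟨n, rfl⟩; positivity⟩
  rw [hmax.csSup_eq]
  refine le_antisymm (le_ciInf hle) (ge_of_tendsto hlim ?_)
  filter_upwards [eventually_ge_atTop 1] with n hn
  exact ciInf_le hbdd ⟨n, hn⟩

namespace ContinuousLinearMap

variable {𝕜 E F G : Type*} [NontriviallyNormedField 𝕜] [SeminormedAddCommGroup E]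
  [NormedSpace 𝕜 E] [NormedAddCommGroup F] [NormedSpace 𝕜 F] [SeminormedAddCommGroup G]
  [NormedSpace 𝕜 G] {ψ : E →L[𝕜] F}

theorem opNorm_le_iff_of_denseRange (hψ : DenseRange ψ) (D : F →L[𝕜] G) {c : ℝ} (hc : 0 ≤ c) :
    ‖D‖ ≤ c ↔ ∀ x, ‖D (ψ x)‖ ≤ c * ‖ψ x‖ :=
  ⟨fun h x => D.le_of_opNorm_le h (ψ x), fun h => D.opNorm_le_bound hc fun y =>
    hψ.induction_on y (isClosed_le D.continuous.norm (continuous_const.mul continuous_norm)) h⟩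

theorem isUnit_of_denseRange [CompleteSpace F] (hψ : DenseRange ψ) {D : F →L[𝕜] F} (c : ℝ≥0)
    (hbound : ∀ x, ‖ψ x‖ ≤ c * ‖D (ψ x)‖) (hrange : ∀ x, ψ x ∈ Set.range D) : IsUnit D := by
  have hanti : AntilipschitzWith c D := D.antilipschitz_of_bound fun y =>
    hψ.induction_on y (isClosed_le continuous_norm (continuous_const.mul D.continuous.norm)) hbound
  have hdense : DenseRange D := hψ.mono (Set.range_subset_iff.mpr hrange)
  refine isUnit_iff_bijective.mpr ⟨hanti.injective, ?_⟩
  rw [← Set.range_eq_univ, ← (hanti.isClosed_range D.uniformContinuous).closure_eq,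
    hdense.closure_eq]

theorem comp_pow_eq_pow_comp {X : E →L[𝕜] E} {D : F →L[𝕜] F} (h : ψ.comp X = D.comp ψ) (n : ℕ) :
    ψ.comp (X ^ n) = (D ^ n).comp ψ := by
  ext x
  simp only [comp_apply, FunLike.coe_pow_eq_iterate]
  exact Function.Semiconj.iterate_right (f := ψ) (ga := X) (gb := D) (fun y => congr($h y)) n x

end ContinuousLinearMap

section RangeClosure

variable {𝕜 E : Type*} [RCLike 𝕜] [NormedAddCommGroup E] [InnerProductSpace 𝕜 E]
  (R : E →L[𝕜] E)

abbrev rangeClosure : Submodule 𝕜 E := R.range.topologicalClosure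

def toRangeClosure : E →L[𝕜] rangeClosure R :=
  R.codRestrict _ fun x => R.range.le_topologicalClosure ⟨x, rfl⟩

theorem denseRange_toRangeClosure : DenseRange (toRangeClosure R) := by
  rw [DenseRange, Subtype.dense_iff, ← Set.range_comp]
  exact (Submodule.topologicalClosure_coe _).subset

variable {R}

theorem mapsTo_rangeClosure {U : E →L[𝕜] E} (hU : U.comp R = R.comp U) :
    ∀ x ∈ rangeClosure R, U x ∈ rangeClosure R := by
  refine R.range.topologicalClosure_minimal (t := (rangeClosure R).comap (U : E →ₗ[𝕜] E)) ?_
    (R.range.isClosed_topologicalClosure.preimage U.continuous)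
  rintro _ ⟨x, rfl⟩
  have : U (R x) = R (U x) := congr($hU x)
  exact R.range.le_topologicalClosure ⟨U x, this.symm⟩

theorem nontrivial_rangeClosure (hR : R ≠ 0) : Nontrivial (rangeClosure R) := by
  obtain ⟨x, hx⟩ := DFunLike.ne_iff.mp hR
  exact nontrivial_of_ne (toRangeClosure R x) 0 fun h => hx congr(Subtype.val $h)

def restrictRangeClosure (U : E →L[𝕜] E) (hU : U.comp R = R.comp U) :
    rangeClosure R →L[𝕜] rangeClosure R :=
  U.restrict (mapsTo_rangeClosure hU)

theorem toRangeClosure_comp_eq {X U : E →L[𝕜] E} (hU : U.comp R = R.comp U)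
    (hX : R.comp X = U.comp R) :
    (toRangeClosure R).comp X = (restrictRangeClosure U hU).comp (toRangeClosure R) := by
  ext x
  exact congr($hX x)

theorem commute_restrictRangeClosure {U V : E →L[𝕜] E} (hU : U.comp R = R.comp U)
    (hV : V.comp R = R.comp V) (hUV : Commute U V) :
    Commute (restrictRangeClosure U hU) (restrictRangeClosure V hV) := by
  ext x
  exact congr($hUV.eq x)

theorem restrictRangeClosure_self_orthogonalProjectionOnto_apply [CompleteSpace E]
    (hR : IsSelfAdjoint R) (x : E) :
    restrictRangeClosure R rfl ((rangeClosure R).orthogonalProjectionOnto x) =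
      toRangeClosure R x := by
  have hker := (rangeClosure R).sub_starProjection_mem_orthogonal x
  rw [Submodule.orthogonal_closure, orthogonal_range, hR.adjoint_eq, LinearMap.mem_ker,
    map_sub, sub_eq_zero] at hker
  ext
  exact hker.symm

theorem exists_toRangeClosure_comp_eq [CompleteSpace E] (hR : IsSelfAdjoint R)
    {V : rangeClosure R →L[𝕜] rangeClosure R} (hV : Commute V (restrictRangeClosure R rfl)) :
    ∃ Y : E →L[𝕜] E, (toRangeClosure R).comp Y = V.comp (toRangeClosure R) := by
  refine ⟨(rangeClosure R).subtypeL.comp (V.comp (rangeClosure R).orthogonalProjectionOnto), ?_⟩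
  ext1 x
  calc toRangeClosure R (V ((rangeClosure R).orthogonalProjectionOnto x))
      = restrictRangeClosure R rfl (V ((rangeClosure R).orthogonalProjectionOnto x)) := rfl
    _ = V (restrictRangeClosure R rfl ((rangeClosure R).orthogonalProjectionOnto x)) :=
        congr($(hV.eq.symm) ((rangeClosure R).orthogonalProjectionOnto x))
    _ = V (toRangeClosure R x) := by
        rw [restrictRangeClosure_self_orthogonalProjectionOnto_apply hR]

end RangeClosure

section ASeminorm

variable {A R X : H →L[ℂ] H} {D : rangeClosure R →L[ℂ] rangeClosure R}

theorem anorm_eq_norm_toRangeClosure (hR : IsSelfAdjoint R) (hRA : R.comp R = A) (x : H) :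
    anorm A x = ‖toRangeClosure R x‖ := by
  have h : ⟪A x, x⟫_ℂ = ⟪R x, R x⟫_ℂ := by
    rw [← hRA]
    exact hR.isSymmetric (R x) x
  rw [anorm, h, inner_self_eq_norm_sq (𝕜 := ℂ), Real.sqrt_sq (norm_nonneg _)]
  rfl

theorem comp_eq_self_iff_toRangeClosure (hR : IsSelfAdjoint R) (hRA : R.comp R = A) :
    A.comp X = A ↔ (toRangeClosure R).comp X = toRangeClosure R := by
  constructor
  · intro hX
    ext1 x
    have hA : A (X x - x) = 0 := by rw [map_sub, ← comp_apply, hX, sub_self]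
    have h0 : anorm A (X x - x) = 0 := by simp [anorm, hA]
    rwa [anorm_eq_norm_toRangeClosure hR hRA, norm_eq_zero, map_sub, sub_eq_zero] at h0
  · intro hX
    rw [← hRA, comp_assoc]
    congr 1
    ext x
    exact congr(Subtype.val ($hX x))

theorem opANorm_eq_norm (hR : IsSelfAdjoint R) (hRA : R.comp R = A)
    (hXD : (toRangeClosure R).comp X = D.comp (toRangeClosure R)) : opANorm A X = ‖D‖ := by
  have hXD' (x : H) : toRangeClosure R (X x) = D (toRangeClosure R x) := congr($hXD x)
  have hset : {c : ℝ | 0 ≤ c ∧ ∀ x, anorm A (X x) ≤ c * anorm A x} = Set.Ici ‖D‖ := by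
    ext c
    simp only [anorm_eq_norm_toRangeClosure hR hRA, hXD', Set.mem_ofPred_eq, Set.mem_Ici]
    constructor
    · rintro ⟨hc, h⟩
      exact (opNorm_le_iff_of_denseRange (denseRange_toRangeClosure R) D hc).mpr h
    · intro h
      have hc := (norm_nonneg D).trans h
      exact ⟨hc, (opNorm_le_iff_of_denseRange (denseRange_toRangeClosure R) D hc).mp h⟩
  rw [opANorm, hset, csInf_Ici]

theorem isUnit_of_aInv (hR : IsSelfAdjoint R) (hRA : R.comp R = A)
    (hXD : (toRangeClosure R).comp X = D.comp (toRangeClosure R)) (hX : AInv A X) : IsUnit D := by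
  obtain ⟨-, Y, -, ⟨c, hc, hY⟩, hXY, hYX⟩ := hX
  rw [comp_eq_self_iff_toRangeClosure hR hRA] at hXY hYX
  have hXD' (x : H) : toRangeClosure R (X x) = D (toRangeClosure R x) := congr($hXD x)
  have hXY' (x : H) : toRangeClosure R (X (Y x)) = toRangeClosure R x := congr($hXY x)
  have hYX' (x : H) : toRangeClosure R (Y (X x)) = toRangeClosure R x := congr($hYX x)
  refine isUnit_of_denseRange (denseRange_toRangeClosure R) ⟨c, hc.le⟩ (fun x => ?_) fun x =>
    ⟨toRangeClosure R (Y x), by rw [← hXD', hXY']⟩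
  calc ‖toRangeClosure R x‖ = anorm A (Y (X x)) := by
        rw [anorm_eq_norm_toRangeClosure hR hRA, hYX']
    _ ≤ c * anorm A (X x) := hY _
    _ = c * ‖D (toRangeClosure R x)‖ := by rw [anorm_eq_norm_toRangeClosure hR hRA, hXD']

theorem aInv_of_isUnit_s6 (hR : IsSelfAdjoint R) (hRA : R.comp R = A) (hA0 : A ≠ 0)
    (hXD : (toRangeClosure R).comp X = D.comp (toRangeClosure R)) (hD : IsUnit D)
    (hDR : Commute D (restrictRangeClosure R rfl)) : AInv A X := by
  obtain ⟨u, rfl⟩ := hD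
  obtain ⟨Y, hY⟩ := exists_toRangeClosure_comp_eq hR hDR.units_inv_left
  have hXY : A.comp (X.comp Y) = A := by
    rw [comp_eq_self_iff_toRangeClosure hR hRA, ← comp_assoc, hXD, comp_assoc, hY,
      ← comp_assoc, ← mul_def, u.mul_inv]
    rfl
  have hYX : A.comp (Y.comp X) = A := by
    rw [comp_eq_self_iff_toRangeClosure hR hRA, ← comp_assoc, hY, comp_assoc, hXD,
      ← comp_assoc, ← mul_def, u.inv_mul]
    rfl
  refine ⟨?_, Y, ?_, ⟨‖(↑u⁻¹ : rangeClosure R →L[ℂ] rangeClosure R)‖ + 1, by positivity,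
    fun x => ?_⟩, hXY, hYX⟩
  · rintro rfl
    exact hA0 (by rw [← hXY, zero_comp, comp_zero])
  · rintro rfl
    exact hA0 (by rw [← hXY, comp_zero, comp_zero])
  · rw [anorm_eq_norm_toRangeClosure hR hRA, anorm_eq_norm_toRangeClosure hR hRA,
      ← comp_apply, hY, comp_apply]
    exact (le_opNorm _ _).trans (by gcongr; linarith)

theorem sigmaA_eq_spectrum (hR : IsSelfAdjoint R) (hRA : R.comp R = A) (hA0 : A ≠ 0)
    {S U : H →L[ℂ] H} (hU : U.comp R = R.comp U) (hS : R.comp S = U.comp R) :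
    sigmaA A S = spectrum ℂ (restrictRangeClosure U hU) := by
  ext lam
  have hXD : (toRangeClosure R).comp (lam • 1 - S) =
      (lam • 1 - restrictRangeClosure U hU).comp (toRangeClosure R) := by
    rw [comp_sub, sub_comp, comp_smul, smul_comp, toRangeClosure_comp_eq hU hS]
    rfl
  have hDR : Commute (lam • 1 - restrictRangeClosure U hU) (restrictRangeClosure R rfl) := by
    rw [← Algebra.algebraMap_eq_smul_one]
    exact (Algebra.commute_algebraMap_left lam _).sub_left (commute_restrictRangeClosure hU rfl hU)
  simp only [sigmaA, rhoA, Set.mem_compl_iff, Set.mem_ofPred_eq, spectrum.mem_iff,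
    Algebra.algebraMap_eq_smul_one]
  exact not_congr ⟨isUnit_of_aInv hR hRA hXD, fun h => aInv_of_isUnit_s6 hR hRA hA0 hXD h hDR⟩

theorem supSpecA_eq_rA_of_comp_eq (hR : IsSelfAdjoint R) (hRA : R.comp R = A) (hA0 : A ≠ 0)
    {S U : H →L[ℂ] H} (hU : U.comp R = R.comp U) (hS : R.comp S = U.comp R) :
    supSpecA A S = rA A S := by
  have : Nontrivial (rangeClosure R) := nontrivial_rangeClosure (by rintro rfl; simp_all)
  rw [supSpecA, sigmaA_eq_spectrum hR hRA hA0 hU hS, rA]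
  refine (spectrum.sSup_norm_eq_iInf_norm_pow_rpow_inv (restrictRangeClosure U hU)).trans ?_
  simp_rw [opANorm_eq_norm hR hRA (comp_pow_eq_pow_comp (toRangeClosure_comp_eq hU hS) _)]

end ASeminorm

theorem stmt6_general (A sqrtA T S : H →L[ℂ] H) (hA0 : A ≠ 0)
    (hsqrt : sqrtA.IsPositive) (hsq : sqrtA.comp sqrtA = A)
    (hcomm : T.comp sqrtA = sqrtA.comp T)
    (hS : IsDiamond sqrtA T S) :
    supSpecA A S = rA A S := by
  have hR := hsqrt.isSelfAdjoint
  have hU : (adjoint T).comp sqrtA = sqrtA.comp (adjoint T) := by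
    simpa only [adjoint_comp, hR.adjoint_eq] using congr(adjoint $hcomm).symm
  exact supSpecA_eq_rA_of_comp_eq hR hsq hA0 hU hS.1

theorem stmt6 (A sqrtA T S : H →L[ℂ] H) (hA : A.IsPositive) (hA0 : A ≠ 0)
    (hsqrt : sqrtA.IsPositive) (hsq : sqrtA.comp sqrtA = A)
    (hT : MemBA A T) (hcomm : T.comp sqrtA = sqrtA.comp T)
    (hSmem : MemBA A S) (hS : IsDiamond sqrtA T S) :
    supSpecA A S = rA A S :=
  stmt6_general A sqrtA T S hA0 hsqrt hsq hcomm hS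
end

section
/- Let T ∈ B_{A^{1/2}}(H) and let S ∈ B_{A^{1/2}}(H) be the A^{1/2}-adjoint T^⋄ of T. Then every λ ∈ σ_A(T) satisfies |λ| ≤ max{‖T‖_A, ‖S‖_A}; in particular, σ_A(T) is a bounded subset of ℂ. -/
variable {H : Type*} [NormedAddCommGroup H] [InnerProductSpace ℂ H] [CompleteSpace H]

/-!
If `|λ| > max ‖T‖_A ‖S‖_A`, lift `T` and `S = T^⋄` through `A^{1/2}`: there are bounded `Z`, `W`
with `Z A^{1/2} = A^{1/2} T`, `W A^{1/2} = A^{1/2} S` and `‖Z‖, ‖W‖ < |λ|`. Taking adjoints and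
using the defining identity of `T^⋄` gives `A^{1/2} W* = A^{1/2} T`, so `A^{1/2} (λ - T)` equals
both `(λ - Z) A^{1/2}` and `A^{1/2} (λ - W*)`. Both `λ - Z` and `λ - W*` are invertible by the
Neumann series, and `(λ - W*)⁻¹` is then an `A`-inverse of `λ - T`.
-/

section Lift

variable {𝕜 E F G : Type*} [RCLike 𝕜] [NormedAddCommGroup E] [NormedSpace 𝕜 E]
  [NormedAddCommGroup F] [NormedSpace 𝕜 F] [CompleteSpace F]
  [NormedAddCommGroup G] [InnerProductSpace 𝕜 G] [CompleteSpace G]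

-- `D` extends `P x ↦ B x` to the closure of the range of `P`, then precomposes the orthogonal
-- projection onto that closure.
theorem ContinuousLinearMap.exists_comp_eq_of_norm_le (P : E →L[𝕜] G) (B : E →L[𝕜] F) {c : ℝ}
    (hc : 0 ≤ c) (h : ∀ x, ‖B x‖ ≤ c * ‖P x‖) : ∃ D : G →L[𝕜] F, D ∘L P = B ∧ ‖D‖ ≤ c := by
  set K := (LinearMap.range (P : E →ₗ[𝕜] G)).topologicalClosure
  have : CompleteSpace K := (Submodule.isClosed_topologicalClosure _).completeSpace_coe
  let e : E →ₗ[𝕜] K := (P : E →ₗ[𝕜] G).codRestrict K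
    fun x => Submodule.le_topologicalClosure _ (LinearMap.mem_range_self _ x)
  have he : DenseRange e := by
    refine Subtype.dense_iff.mpr fun y hy => ?_
    rwa [← Set.range_comp]
  let D₀ : K →L[𝕜] F := (B : E →ₗ[𝕜] F).extendOfNorm e
  refine ⟨D₀ ∘L K.orthogonalProjectionOnto, ?_, ?_⟩
  · ext x
    have hPx : K.orthogonalProjectionOnto (P x) = e x :=
      K.orthogonalProjectionOnto_mem_subspace_eq_self (e x)
    simp only [ContinuousLinearMap.comp_apply, hPx]
    exact LinearMap.extendOfNorm_eq he ⟨c, h⟩ x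
  · calc ‖D₀ ∘L K.orthogonalProjectionOnto‖ ≤ ‖D₀‖ * ‖K.orthogonalProjectionOnto‖ :=
          ContinuousLinearMap.opNorm_comp_le _ _
      _ ≤ c * 1 := by
          gcongr
          · exact LinearMap.opNorm_extendOfNorm_le he hc h
          · exact K.orthogonalProjectionOnto_norm_le
      _ = c := mul_one c

end Lift

theorem Units.inv_intertwining {M : Type*} [Monoid M] {P L : M} (Z W : Mˣ)
    (hZ : ↑Z * P = P * L) (hW : P * L = P * W) :
    P * (L * ↑W⁻¹) = P ∧ P * ↑W⁻¹ = ↑Z⁻¹ * P ∧ P * (↑W⁻¹ * L) = P := by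
  have right : P * (L * ↑W⁻¹) = P := by rw [← mul_assoc, hW, Units.mul_inv_cancel_right]
  have comm : P * ↑W⁻¹ = ↑Z⁻¹ * P := by
    rw [← Units.inv_mul_cancel_left Z (P * ↑W⁻¹), ← mul_assoc (Z : M), hZ, mul_assoc, right]
  refine ⟨right, comm, ?_⟩
  rw [← mul_assoc, comm, mul_assoc, ← hZ, Units.inv_mul_cancel_left]

theorem ContinuousLinearMap.isUnit_smul_one_sub_of_norm_lt {𝕜 E : Type*} [RCLike 𝕜]
    [NormedAddCommGroup E] [NormedSpace 𝕜 E] [CompleteSpace E] {a : E →L[𝕜] E} {k : 𝕜}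
    (h : ‖a‖ < ‖k‖) : IsUnit (k • 1 - a) := by
  have hres : k ∈ resolventSet 𝕜 a := spectrum.mem_resolventSet_of_norm_lt_mul <|
    (mul_le_of_le_one_right (norm_nonneg a) ContinuousLinearMap.norm_id_le).trans_lt h
  rwa [spectrum.mem_resolventSet_iff, Algebra.algebraMap_eq_smul_one] at hres

theorem MemBA.exists_bound_lt {V : Type*} [NormedAddCommGroup V] [InnerProductSpace ℂ V]
    {A T : V →L[ℂ] V} (hT : MemBA A T) {r : ℝ} (h : opANorm A T < r) :
    ∃ c, 0 ≤ c ∧ c < r ∧ ∀ x, anorm A (T x) ≤ c * anorm A x := by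
  obtain ⟨c₀, hc₀, hbound⟩ := hT
  have hbdd : BddBelow {c : ℝ | 0 ≤ c ∧ ∀ x, anorm A (T x) ≤ c * anorm A x} :=
    ⟨0, fun _ hc => hc.1⟩
  obtain ⟨c, ⟨hc, hcT⟩, hcr⟩ := (csInf_lt_iff hbdd ⟨c₀, hc₀.le, hbound⟩).mp h
  exact ⟨c, hc, hcr, hcT⟩

section ASeminorm

variable {A sqrtA : H →L[ℂ] H}

theorem anorm_eq_norm_apply_s11 (hsqrt : IsSelfAdjoint sqrtA) (hsq : sqrtA * sqrtA = A) (x : H) :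
    anorm A x = ‖sqrtA x‖ := by
  have hinner : inner ℂ (A x) x = inner ℂ (sqrtA x) (sqrtA x) := by
    rw [← hsq, mul_apply_eq_comp, ← hsqrt.adjoint_eq,
      ContinuousLinearMap.adjoint_inner_left, hsqrt.adjoint_eq]
  rw [anorm, hinner, inner_self_eq_norm_sq, Real.sqrt_sq (norm_nonneg _)]

theorem MemBA.exists_mul_eq_of_opANorm_lt (hsqrt : IsSelfAdjoint sqrtA) (hsq : sqrtA * sqrtA = A)
    {T : H →L[ℂ] H} (hT : MemBA A T) {r : ℝ} (h : opANorm A T < r) :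
    ∃ Z : H →L[ℂ] H, Z * sqrtA = sqrtA * T ∧ ‖Z‖ < r := by
  obtain ⟨c, hc, hcr, hcT⟩ := hT.exists_bound_lt h
  obtain ⟨Z, hZ, hZc⟩ := sqrtA.exists_comp_eq_of_norm_le (sqrtA * T) hc fun x => by
    simpa only [anorm_eq_norm_apply_s11 hsqrt hsq, mul_apply_eq_comp] using hcT x
  exact ⟨Z, hZ, hZc.trans_lt hcr⟩

theorem aInv_of_intertwining (hsqrt : IsSelfAdjoint sqrtA) (hsq : sqrtA * sqrtA = A) (hA0 : A ≠ 0)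
    {L : H →L[ℂ] H} (Z W : (H →L[ℂ] H)ˣ) (hZ : ↑Z * sqrtA = sqrtA * L)
    (hW : sqrtA * L = sqrtA * W) : AInv A L := by
  obtain ⟨right, comm, left⟩ := Units.inv_intertwining Z W hZ hW
  have hsqrt0 : sqrtA ≠ 0 := by rintro rfl; exact hA0 (by rw [← hsq, zero_mul])
  refine ⟨fun hL => hsqrt0 ?_, ↑W⁻¹, fun hU => hsqrt0 ?_, ?_, ?_, ?_⟩
  · rw [← right, hL, zero_mul, mul_zero]
  · rw [← right, hU, mul_zero, mul_zero]
  · refine ⟨‖(↑Z⁻¹ : H →L[ℂ] H)‖ + 1, by positivity, fun x => ?_⟩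
    rw [anorm_eq_norm_apply_s11 hsqrt hsq, anorm_eq_norm_apply_s11 hsqrt hsq,
      ← mul_apply_eq_comp, comm, mul_apply_eq_comp]
    exact (ContinuousLinearMap.le_opNorm _ _).trans (by gcongr; linarith)
  · change A * (L * ↑W⁻¹) = A
    rw [← hsq, mul_assoc, right]
  · change A * (↑W⁻¹ * L) = A
    rw [← hsq, mul_assoc, left]

end ASeminorm

theorem sigmaA_subset_closedBall {A sqrtA T S : H →L[ℂ] H} (hA0 : A ≠ 0)
    (hsqrt : IsSelfAdjoint sqrtA) (hsq : sqrtA * sqrtA = A)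
    (hT : MemBA A T) (hSmem : MemBA A S) (hS : sqrtA * S = T.adjoint * sqrtA) :
    sigmaA A T ⊆ Metric.closedBall 0 (max (opANorm A T) (opANorm A S)) := by
  intro lam hlam
  by_contra hlt
  rw [Metric.mem_closedBall, dist_zero_right, not_le, max_lt_iff] at hlt
  apply hlam
  obtain ⟨Z, hZ, hZlam⟩ := hT.exists_mul_eq_of_opANorm_lt hsqrt hsq hlt.1
  obtain ⟨W, hW, hWlam⟩ := hSmem.exists_mul_eq_of_opANorm_lt hsqrt hsq hlt.2
  have hWT : sqrtA * W.adjoint = sqrtA * T := by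
    have h₁ := congrArg star hW
    have h₂ := congrArg star hS
    simp only [star_mul, hsqrt.star_eq, ContinuousLinearMap.star_eq_adjoint,
      ContinuousLinearMap.adjoint_adjoint] at h₁ h₂
    rw [h₁, h₂]
  have hZu := ContinuousLinearMap.isUnit_smul_one_sub_of_norm_lt hZlam
  have hWu := ContinuousLinearMap.isUnit_smul_one_sub_of_norm_lt
    (a := W.adjoint) (by rwa [LinearIsometryEquiv.norm_map])
  refine aInv_of_intertwining hsqrt hsq hA0 hZu.unit hWu.unit ?_ ?_
  · rw [IsUnit.unit_spec, sub_mul, mul_sub, hZ, smul_mul_assoc, mul_smul_comm, one_mul, mul_one]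
  · rw [IsUnit.unit_spec, mul_sub, mul_sub, hWT]

theorem stmt11_general (A sqrtA T S : H →L[ℂ] H) (hA0 : A ≠ 0)
    (hsqrt : sqrtA.IsPositive) (hsq : sqrtA.comp sqrtA = A)
    (hT : MemBA A T) (hSmem : MemBA A S) (hS : IsDiamond sqrtA T S) :
    (∀ lam ∈ sigmaA A T, ‖lam‖ ≤ max (opANorm A T) (opANorm A S)) ∧
      Bornology.IsBounded (sigmaA A T) := by
  have hsub := sigmaA_subset_closedBall hA0 hsqrt.isSelfAdjoint hsq hT hSmem hS.1
  exact ⟨fun lam hlam => by simpa using hsub hlam, Metric.isBounded_closedBall.subset hsub⟩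

theorem stmt11 (A sqrtA T S : H →L[ℂ] H) (hA : A.IsPositive) (hA0 : A ≠ 0)
    (hsqrt : sqrtA.IsPositive) (hsq : sqrtA.comp sqrtA = A)
    (hT : MemBA A T) (hSmem : MemBA A S) (hS : IsDiamond sqrtA T S) :
    (∀ lam ∈ sigmaA A T, ‖lam‖ ≤ max (opANorm A T) (opANorm A S)) ∧
      Bornology.IsBounded (sigmaA A T) :=
  stmt11_general A sqrtA T S hA0 hsqrt hsq hT hSmem hS
end

section
/- Let T ∈ B_{A^{1/2}}(H) be A-invertible in B_{A^{1/2}}(H) with A-inverse S ∈ B_{A^{1/2}}(H), and let T' ∈ B_{A^{1/2}}(H). Let W ∈ B_{A^{1/2}}(H) be the A^{1/2}-adjoint (T'S)^⋄ of T'S. If ‖T'S‖_A < 1 and ‖W‖_A < 1, then T + T' is A-invertible in B_{A^{1/2}}(H). -/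
/-!
Let `P` be the orthogonal projection onto the closure of the range of `A^{1/2}`. Since
`ker A = ker A^{1/2} = ker P`, the equation `A X = A Y` is equivalent to `P X = P Y`, and the
operators of `B_{A^{1/2}}(H)` preserve `ker P`; so `A`-invertibility is invertibility after left
multiplication by `P`. Modulo `P` we have `T + T' = (1 + Q) T` with `Q = T'S`, so it suffices to
invert `1 + Q`. Because `Q* A^{1/2} = A^{1/2} W`, the compression `N = PQP` satisfies
`‖N‖ = ‖P Q* P‖ ≤ ‖W‖_A < 1`, hence `1 + N` is invertible in `B(H)`, and its inverse `F` inverts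
`1 + Q` modulo `P`. Finally `A^{1/2}` intertwines `1 + N` with `1 + M`, `M = P W* P`, where
`‖M‖ ≤ ‖Q‖_A < 1`; thus `A^{1/2} F = (1 + M)⁻¹ A^{1/2}` and `F ∈ B_{A^{1/2}}(H)`.
-/

variable {H : Type*} [NormedAddCommGroup H] [InnerProductSpace ℂ H] [CompleteSpace H]

open ContinuousLinearMap

section InverseMod

variable {R : Type*} [Ring R] {P Q X Y X' Y' : R}

def IsInverseMod (P X Y : R) : Prop :=
  P * X * Y = P ∧ P * Y * X = P

theorem IsInverseMod.mul (h : IsInverseMod P X Y) (h' : IsInverseMod P X' Y')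
    (hX : P * X * P = P * X) (hY' : P * Y' * P = P * Y') :
    IsInverseMod P (X * X') (Y' * Y) := by
  constructor
  · calc P * (X * X') * (Y' * Y) = P * X * P * X' * Y' * Y := by rw [hX]; simp only [mul_assoc]
      _ = P * X * (P * X' * Y') * Y := by simp only [mul_assoc]
      _ = P := by rw [h'.1, hX, h.1]
  · calc P * (Y' * Y) * (X * X') = P * Y' * P * Y * X * X' := by rw [hY']; simp only [mul_assoc]
      _ = P * Y' * (P * Y * X) * X' := by simp only [mul_assoc]
      _ = P := by rw [h.2, hY', h'.2]

theorem IsInverseMod.congr (h : IsInverseMod P X Y) (hXX' : P * X = P * X')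
    (hY : P * Y * P = P * Y) : IsInverseMod P X' Y := by
  constructor
  · rw [← hXX', h.1]
  · calc P * Y * X' = P * Y * P * X' := by rw [hY]
      _ = P * Y * (P * X) := by rw [mul_assoc, hXX']
      _ = P := by rw [← mul_assoc, hY, h.2]

theorem IsInverseMod.mul_add_eq (h : IsInverseMod P X Y) (hX' : P * X' * P = P * X') :
    P * (X + X') = P * ((1 + X' * Y) * X) := by
  calc P * (X + X') = P * X + P * X' * (P * Y * X) := by rw [h.2, hX', mul_add]
    _ = P * X + P * X' * P * Y * X := by simp only [mul_assoc]
    _ = P * ((1 + X' * Y) * X) := by rw [hX']; noncomm_ring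

theorem isInverseMod_one_add (hP : IsIdempotentElem P) (hQ : P * Q * P = P * Q) (u : Rˣ)
    (hu : (u : R) = 1 + P * Q * P) : IsInverseMod P (1 + Q) ↑u⁻¹ := by
  rw [hQ] at hu
  constructor
  · have hPu : P * (1 + Q) = P * u := by rw [hu, mul_add, mul_add, ← mul_assoc, hP.eq]
    rw [hPu, mul_assoc, u.mul_inv, mul_one]
  · have hPQ : P * Q * (1 - P) = 0 := by rw [mul_sub, mul_one, hQ, sub_self]
    have hu_one_sub : ↑u⁻¹ * (1 - P) = 1 - P := by
      calc ↑u⁻¹ * (1 - P) = ↑u⁻¹ * (↑u * (1 - P)) := by rw [hu, add_mul, one_mul, hPQ, add_zero]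
        _ = 1 - P := by rw [← mul_assoc, u.inv_mul, one_mul]
    calc P * ↑u⁻¹ * (1 + Q) = P * (↑u⁻¹ * ↑u) + P * (↑u⁻¹ * (1 - P)) * Q := by
          rw [hu]; noncomm_ring
      _ = P := by rw [u.inv_mul, hu_one_sub, hP.mul_one_sub_self, mul_one, zero_mul, add_zero]

end InverseMod

theorem isUnit_one_add_of_norm_lt_one {R : Type*} [NormedRing R] [HasSummableGeomSeries R] {x : R}
    (h : ‖x‖ < 1) : IsUnit (1 + x) := by
  simpa only [sub_neg_eq_add] using isUnit_one_sub_of_norm_lt_one (x := -x) (by rwa [norm_neg])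

section Projection

variable {B : H →L[ℂ] H}

theorem isIdempotentElem_projA (B : H →L[ℂ] H) : IsIdempotentElem (projA B) :=
  Submodule.isIdempotentElem_starProjection _

theorem isSelfAdjoint_projA (B : H →L[ℂ] H) : IsSelfAdjoint (projA B) :=
  isSelfAdjoint_starProjection _

theorem projA_apply_eq_zero_iff_s12 (hB : IsSelfAdjoint B) {x : H} : projA B x = 0 ↔ B x = 0 := by
  change Submodule.starProjection _ x = 0 ↔ _
  rw [Submodule.starProjection_apply_eq_zero_iff, Submodule.orthogonal_closure, orthogonal_range,
    hB.adjoint_eq]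
  rfl

theorem projA_mul_self (B : H →L[ℂ] H) : projA B * B = B := by
  ext x
  exact Submodule.starProjection_eq_self_iff.mpr
    (Submodule.le_topologicalClosure _ (LinearMap.mem_range_self _ x))

theorem mul_projA_s12 (hB : IsSelfAdjoint B) : B * projA B = B := by
  ext x
  have h : projA B (x - projA B x) = 0 := by
    rw [map_sub, ← mul_apply_eq_comp (projA B), (isIdempotentElem_projA B).eq, sub_self]
  rw [projA_apply_eq_zero_iff_s12 hB, map_sub, sub_eq_zero] at h
  exact h.symm

theorem mul_eq_mul_iff_projA_mul_eq (hB : IsSelfAdjoint B) {X Y : H →L[ℂ] H} :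
    B * X = B * Y ↔ projA B * X = projA B * Y := by
  simp only [ContinuousLinearMap.ext_iff, mul_apply_eq_comp]
  refine forall_congr' fun x => ?_
  rw [← sub_eq_zero, ← map_sub, ← projA_apply_eq_zero_iff_s12 hB, map_sub, sub_eq_zero]

theorem projA_mul_mul_projA_s12 (hB : IsSelfAdjoint B) {X : H →L[ℂ] H}
    (hX : ∀ x, B x = 0 → B (X x) = 0) : projA B * X * projA B = projA B * X := by
  rw [mul_assoc, ← mul_eq_mul_iff_projA_mul_eq hB]
  ext x
  have h : B (projA B x - x) = 0 := by
    rw [map_sub, ← mul_apply_eq_comp B, mul_projA_s12 hB, sub_self]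
  simpa [sub_eq_zero] using hX _ h

theorem mul_projA_mul_mul_projA (hB : IsSelfAdjoint B) {Z R : H →L[ℂ] H}
    (hZR : Z * B = B * R) (hR : projA B * R * projA B = projA B * R) :
    B * (projA B * R * projA B) = projA B * Z * projA B * B := by
  calc B * (projA B * R * projA B) = B * projA B * R := by rw [hR, mul_assoc]
    _ = projA B * (Z * B) := by rw [mul_projA_s12 hB, hZR, ← mul_assoc, projA_mul_self]
    _ = projA B * Z * projA B * B := by rw [mul_assoc _ (projA B), projA_mul_self, mul_assoc]

theorem norm_projA_mul_mul_projA_le {Z R : H →L[ℂ] H} {c : ℝ}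
    (hc : 0 ≤ c) (hZR : Z * B = B * R) (hR : ∀ x, ‖B (R x)‖ ≤ c * ‖B x‖) :
    ‖projA B * Z * projA B‖ ≤ c := by
  have hK : ∀ y ∈ closure (LinearMap.range (B : H →ₗ[ℂ] H) : Set H), ‖projA B (Z y)‖ ≤ c * ‖y‖ := by
    refine closure_minimal ?_ (isClosed_le (by fun_prop : Continuous fun y => ‖projA B (Z y)‖)
      (by fun_prop : Continuous fun y => c * ‖y‖))
    rintro _ ⟨x, rfl⟩
    calc ‖projA B (Z (B x))‖ = ‖B (R x)‖ := by
          rw [← mul_apply_eq_comp Z, hZR, ← mul_apply_eq_comp (projA B), ← mul_assoc,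
            projA_mul_self, mul_apply_eq_comp]
      _ ≤ c * ‖B x‖ := hR x
  refine opNorm_le_bound _ hc fun y => ?_
  calc ‖projA B (Z (projA B y))‖ ≤ c * ‖projA B y‖ := by
        refine hK _ ?_
        rw [← Submodule.topologicalClosure_coe]
        exact Submodule.starProjection_apply_mem _ y
    _ ≤ c * ‖y‖ := by gcongr; exact Submodule.norm_starProjection_apply_le _ y

end Projection

section Seminorm

variable {E : Type*} [NormedAddCommGroup E] [InnerProductSpace ℂ E] {A R X : E →L[ℂ] E}

theorem MemBA.mul (hR : MemBA A R) (hX : MemBA A X) : MemBA A (R * X) := by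
  obtain ⟨c, hc, hRc⟩ := hR
  obtain ⟨d, hd, hXd⟩ := hX
  refine ⟨c * d, mul_pos hc hd, fun x => ?_⟩
  calc anorm A (R (X x)) ≤ c * anorm A (X x) := hRc _
    _ ≤ c * (d * anorm A x) := by gcongr; exact hXd x
    _ = c * d * anorm A x := by ring

theorem opANorm_nonneg : 0 ≤ opANorm A R :=
  Real.sInf_nonneg fun _ hc => hc.1

theorem anorm_le_opANorm_mul (hR : MemBA A R) (x : E) :
    anorm A (R x) ≤ opANorm A R * anorm A x := by
  obtain ⟨c, hc, hRc⟩ := hR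
  rcases (show 0 ≤ anorm A x from Real.sqrt_nonneg _).eq_or_lt with hx | hx
  · simpa [← hx] using hRc x
  · rw [← div_le_iff₀ hx]
    refine le_csInf ⟨c, hc.le, hRc⟩ fun d hd => ?_
    rw [div_le_iff₀ hx]
    exact hd.2 x

end Seminorm

section SquareRoot

variable {A sqrtA R X Y : H →L[ℂ] H}

theorem anorm_eq_norm_s12 (hsa : IsSelfAdjoint sqrtA) (hsq : sqrtA * sqrtA = A) (x : H) :
    anorm A x = ‖sqrtA x‖ := by
  have h : inner ℂ (sqrtA (sqrtA x)) x = inner ℂ (sqrtA x) (sqrtA x) := by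
    simpa only [hsa.adjoint_eq] using adjoint_inner_left sqrtA x (sqrtA x)
  rw [anorm, ← hsq, mul_apply_eq_comp, h, inner_self_eq_norm_sq, Real.sqrt_sq (norm_nonneg _)]

theorem mul_eq_mul_iff_sqrt_mul_eq (hsa : IsSelfAdjoint sqrtA) (hsq : sqrtA * sqrtA = A) :
    A * X = A * Y ↔ sqrtA * X = sqrtA * Y := by
  refine ⟨fun h => ?_, fun h => by rw [← hsq, mul_assoc, h, mul_assoc]⟩
  ext x
  have hA : A (X x - Y x) = 0 := by
    rw [map_sub, ← mul_apply_eq_comp A, ← mul_apply_eq_comp A, h, sub_self]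
  have h0 : ‖sqrtA (X x - Y x)‖ = 0 := by
    rw [← anorm_eq_norm_s12 hsa hsq, anorm, hA, inner_zero_left, map_zero, Real.sqrt_zero]
  rw [norm_eq_zero, map_sub, sub_eq_zero] at h0
  exact h0

theorem isInverseMod_projA_iff (hsa : IsSelfAdjoint sqrtA) (hsq : sqrtA * sqrtA = A) :
    IsInverseMod (projA sqrtA) X Y ↔ A * (X * Y) = A ∧ A * (Y * X) = A := by
  have h : ∀ Z, A * Z = A ↔ projA sqrtA * Z = projA sqrtA := fun Z => by
    simpa only [mul_one] using
      (mul_eq_mul_iff_sqrt_mul_eq hsa hsq (X := Z) (Y := 1)).trans (mul_eq_mul_iff_projA_mul_eq hsa)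
  simp only [IsInverseMod, mul_assoc, h]

theorem MemBA.projA_mul_mul_projA (hsa : IsSelfAdjoint sqrtA) (hsq : sqrtA * sqrtA = A)
    (hR : MemBA A R) : projA sqrtA * R * projA sqrtA = projA sqrtA * R := by
  refine _root_.projA_mul_mul_projA_s12 hsa fun x hx => ?_
  obtain ⟨c, -, hRc⟩ := hR
  simpa [anorm_eq_norm_s12 hsa hsq, hx] using hRc x

theorem memBA_of_mul_eq (hsa : IsSelfAdjoint sqrtA) (hsq : sqrtA * sqrtA = A) {G : H →L[ℂ] H}
    (h : sqrtA * X = G * sqrtA) : MemBA A X := by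
  refine ⟨‖G‖ + 1, by positivity, fun x => ?_⟩
  rw [anorm_eq_norm_s12 hsa hsq, anorm_eq_norm_s12 hsa hsq, ← mul_apply_eq_comp sqrtA, h,
    mul_apply_eq_comp]
  calc ‖G (sqrtA x)‖ ≤ ‖G‖ * ‖sqrtA x‖ := G.le_opNorm _
    _ ≤ (‖G‖ + 1) * ‖sqrtA x‖ := by gcongr; linarith

theorem norm_projA_mul_mul_projA_le_opANorm (hsa : IsSelfAdjoint sqrtA)
    (hsq : sqrtA * sqrtA = A) {Z : H →L[ℂ] H} (hR : MemBA A R) (hZR : Z * sqrtA = sqrtA * R) :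
    ‖projA sqrtA * Z * projA sqrtA‖ ≤ opANorm A R :=
  norm_projA_mul_mul_projA_le opANorm_nonneg hZR fun x => by
    simpa only [anorm_eq_norm_s12 hsa hsq] using anorm_le_opANorm_mul hR x

end SquareRoot

theorem exists_memBA_isInverseMod_one_add {A sqrtA Q W : H →L[ℂ] H} (hsa : IsSelfAdjoint sqrtA)
    (hsq : sqrtA * sqrtA = A) (hQ : MemBA A Q) (hW : MemBA A W)
    (hQW : star Q * sqrtA = sqrtA * W) (hQ1 : opANorm A Q < 1) (hW1 : opANorm A W < 1) :
    ∃ F, MemBA A F ∧ IsInverseMod (projA sqrtA) (1 + Q) F := by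
  set P := projA sqrtA
  have hPQ : P * Q * P = P * Q := hQ.projA_mul_mul_projA hsa hsq
  have hWQ : star W * sqrtA = sqrtA * Q := by
    have h := congrArg star hQW
    rw [star_mul (star Q), star_star, star_mul sqrtA, hsa.star_eq] at h
    exact h.symm
  obtain ⟨u, hu⟩ : IsUnit (1 + P * Q * P) := by
    refine isUnit_one_add_of_norm_lt_one (lt_of_eq_of_lt ?_
      ((norm_projA_mul_mul_projA_le_opANorm hsa hsq hW hQW).trans_lt hW1))
    rw [← norm_star, star_mul, star_mul, (isSelfAdjoint_projA _).star_eq, ← mul_assoc]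
  obtain ⟨v, hv⟩ : IsUnit (1 + P * star W * P) :=
    isUnit_one_add_of_norm_lt_one
      ((norm_projA_mul_mul_projA_le_opANorm hsa hsq hQ hWQ).trans_lt hQ1)
  refine ⟨↑u⁻¹, memBA_of_mul_eq hsa hsq (SemiconjBy.units_inv_right (x := u) (y := v) ?_),
    isInverseMod_one_add (isIdempotentElem_projA _) hPQ u hu⟩
  rw [hu, hv]
  exact (SemiconjBy.one_right _).add_right (mul_projA_mul_mul_projA hsa hWQ hPQ)

theorem stmt12_general (A sqrtA T S T' W : H →L[ℂ] H) (hA0 : A ≠ 0)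
    (hsqrt : sqrtA.IsPositive) (hsq : sqrtA.comp sqrtA = A)
    (hSmem : MemBA A S)
    (hTS : A.comp (T.comp S) = A) (hST : A.comp (S.comp T) = A)
    (hT' : MemBA A T') (hWmem : MemBA A W) (hW : IsDiamond sqrtA (T'.comp S) W)
    (h1 : opANorm A (T'.comp S) < 1) (h2 : opANorm A W < 1) :
    AInv A (T + T') := by
  have hsa : IsSelfAdjoint sqrtA := hsqrt.isSelfAdjoint
  have hP : IsIdempotentElem (projA sqrtA) := isIdempotentElem_projA _
  have hinvT : IsInverseMod (projA sqrtA) T S := (isInverseMod_projA_iff hsa hsq).mpr ⟨hTS, hST⟩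
  obtain ⟨F, hF, hinvQ⟩ :=
    exists_memBA_isInverseMod_one_add hsa hsq (hT'.mul hSmem) hWmem hW.1.symm h1 h2
  have hQP := (hT'.mul hSmem).projA_mul_mul_projA hsa hsq
  have hinv : IsInverseMod (projA sqrtA) (T + T') (S * F) :=
    (hinvQ.mul hinvT (by simp only [mul_add, add_mul, mul_one, hP.eq, hQP])
      (hSmem.projA_mul_mul_projA hsa hsq)).congr
      (hinvT.mul_add_eq (hT'.projA_mul_mul_projA hsa hsq)).symm
      ((hSmem.mul hF).projA_mul_mul_projA hsa hsq)
  obtain ⟨hl, hr⟩ := (isInverseMod_projA_iff hsa hsq).mp hinv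
  refine ⟨?_, S * F, ?_, hSmem.mul hF, by simpa only [mul_def] using hl,
    by simpa only [mul_def] using hr⟩ <;> intro h
  · rw [h, zero_mul, mul_zero] at hl
    exact hA0 hl.symm
  · rw [h, mul_zero, mul_zero] at hl
    exact hA0 hl.symm

theorem stmt12 (A sqrtA T S T' W : H →L[ℂ] H) (hA : A.IsPositive) (hA0 : A ≠ 0)
    (hsqrt : sqrtA.IsPositive) (hsq : sqrtA.comp sqrtA = A)
    (hT : MemBA A T) (hT0 : T ≠ 0) (hSmem : MemBA A S) (hS0 : S ≠ 0)
    (hTS : A.comp (T.comp S) = A) (hST : A.comp (S.comp T) = A)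
    (hT' : MemBA A T') (hWmem : MemBA A W) (hW : IsDiamond sqrtA (T'.comp S) W)
    (h1 : opANorm A (T'.comp S) < 1) (h2 : opANorm A W < 1) :
    AInv A (T + T') :=
  stmt12_general A sqrtA T S T' W hA0 hsqrt hsq hSmem hTS hST hT' hWmem hW h1 h2
end
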